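/- arXiv:1403.4930 — 7 statements merged into one kernel-verified Lean document; each statement's English description precedes it below -/
import Mathlib

section
/- Every closed bounded curvature path has length at least 2π. That is, if γ : [0,s] → ℝ² is continuously differentiable with ‖γ'(t)‖ = 1 for all t, γ' is 1-Lipschitz on [0,s], s > 0, γ(0) = γ(s) and γ'(0) = γ'(s), then s ≥ 2π. -/
open Real Set

noncomputable section

/-- Points of the Euclidean plane. -/
abbrev Pt : Type := EuclideanSpace ℝ (Fin 2)

/-- `BCPath γ γ' s` : `γ : [0,s] → ℝ²` is a bounded curvature path (curvature bound 1):
continuously differentiable with derivative `γ'`, unit speed, and `γ'` 1-Lipschitz on `[0,s]`. -/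
structure BCPath (γ γ' : ℝ → Pt) (s : ℝ) : Prop where
  nonneg : 0 ≤ s
  hasDeriv : ∀ t ∈ Icc (0:ℝ) s, HasDerivWithinAt γ (γ' t) (Icc (0:ℝ) s) t
  contDeriv : ContinuousOn γ' (Icc (0:ℝ) s)
  unitSpeed : ∀ t ∈ Icc (0:ℝ) s, ‖γ' t‖ = 1
  lipDeriv : LipschitzOnWith 1 γ' (Icc (0:ℝ) s)

/-- Endpoint condition: the path starts at `x` tangent to `X` and ends at `y` tangent to `Y`. -/
def EndCond (γ γ' : ℝ → Pt) (s : ℝ) (x X y Y : Pt) : Prop :=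
  γ 0 = x ∧ γ' 0 = X ∧ γ s = y ∧ γ' s = Y

/-- On `[a,b]` the path is an arc of a unit-radius circle. -/
def ArcOn (γ : ℝ → Pt) (a b : ℝ) : Prop :=
  ∃ c : Pt, ∀ t ∈ Icc a b, ‖γ t - c‖ = 1

/-- On `[a,b]` the (unit-speed) path is affine: a line segment. -/
def SegOn (γ γ' : ℝ → Pt) (a b : ℝ) : Prop :=
  ∀ t ∈ Icc a b, γ t = γ a + (t - a) • γ' a

/-- `β` is a csc path on `[0,ℓ]` with break points `t₁ ≤ t₂`: circle arc, segment, circle arc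
(pieces possibly of zero length). -/
def IsCSC (β β' : ℝ → Pt) (ℓ t₁ t₂ : ℝ) : Prop :=
  0 ≤ t₁ ∧ t₁ ≤ t₂ ∧ t₂ ≤ ℓ ∧ ArcOn β 0 t₁ ∧ SegOn β β' t₁ t₂ ∧ ArcOn β t₂ ℓ

/-- `η` is a cs path on `[0,ℓ]`: a finite concatenation of line segments and unit-circle arcs. -/
def IsCS (η η' : ℝ → Pt) (ℓ : ℝ) : Prop :=
  ∃ (k : ℕ) (t : ℕ → ℝ), t 0 = 0 ∧ t k = ℓ ∧ (∀ i < k, t i ≤ t (i+1)) ∧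
    ∀ i < k, SegOn η η' (t i) (t (i+1)) ∨ ArcOn η (t i) (t (i+1))

/-- Bounded curvature homotopy between `γ` (length `s₀`) and `η` (length `s₁`), both with
endpoint condition `(x,X),(y,Y)`: a one-parameter family of bounded curvature paths `F p`
of length `L p` with that endpoint condition, depending continuously on `p`. -/
def BddHomotopic (x X y Y : Pt) (γ : ℝ → Pt) (s₀ : ℝ) (η : ℝ → Pt) (s₁ : ℝ) : Prop :=
  ∃ (F F' : ℝ → ℝ → Pt) (L : ℝ → ℝ),
    (∀ p ∈ Icc (0:ℝ) 1, BCPath (F p) (F' p) (L p) ∧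
      F p 0 = x ∧ F' p 0 = X ∧ F p (L p) = y ∧ F' p (L p) = Y) ∧
    L 0 = s₀ ∧ L 1 = s₁ ∧
    (∀ t ∈ Icc (0:ℝ) s₀, F 0 t = γ t) ∧
    (∀ t ∈ Icc (0:ℝ) s₁, F 1 t = η t) ∧
    ContinuousOn L (Icc (0:ℝ) 1) ∧
    ContinuousOn (fun q : ℝ × ℝ => F q.1 (q.2 * L q.1)) (Icc (0:ℝ) 1 ×ˢ Icc (0:ℝ) 1)

/-- `θ` is a continuous turning lift of the unit-speed path with derivative `γ'` on `[0,s]`. -/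
def TurningLift (γ' : ℝ → Pt) (s : ℝ) (θ : ℝ → ℝ) : Prop :=
  ContinuousOn θ (Icc (0:ℝ) s) ∧
  ∀ t ∈ Icc (0:ℝ) s,
    γ' t = (WithLp.equiv 2 (Fin 2 → ℝ)).symm ![Real.cos (θ t), Real.sin (θ t)]

/-!
Put `m = s / 2`. The tangent `γ'` is a 1-Lipschitz map into the unit circle, so the angle between
`γ' m` and `γ' t` is at most `|t - m|`: subdivide `[m, t]` into `n` pieces, each of which turns by
at most `2 arcsin (h / 2) = h + o(h)`, and let `n → ∞`. For `s ≤ 2π` this gives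
`cos (t - m) ≤ ⟪γ' m, γ' t⟫`, and integrating over `[0, s]` yields
`2 sin (s / 2) ≤ ⟪γ' m, γ s - γ 0⟫`. For a closed path the right side vanishes, which is
impossible when `0 < s < 2π`.
-/

open Filter Topology InnerProductGeometry RealInnerProductSpace

theorem Real.tendsto_nat_mul_arcsin_div (c : ℝ) :
    Tendsto (fun n : ℕ => n * arcsin (c / n)) atTop (𝓝 c) := by
  rcases eq_or_ne c 0 with rfl | hc
  · simp
  have hderiv : HasDerivAt arcsin 1 0 := by
    simpa using hasDerivAt_arcsin (x := 0) (by norm_num) (by norm_num)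
  have hpos : Tendsto (fun n : ℕ => c / n) atTop (𝓝[≠] 0) :=
    tendsto_nhdsWithin_of_tendsto_nhds_of_eventually_within _
      (tendsto_const_div_atTop_nhds_zero_nat c)
      (eventually_ne_atTop 0 |>.mono fun n hn => div_ne_zero hc (Nat.cast_ne_zero.2 hn))
  have hslope := (hderiv.tendsto_slope_zero.comp hpos).const_mul c
  rw [mul_one] at hslope
  refine hslope.congr' ((eventually_ne_atTop 0).mono fun n hn => ?_)
  have hn' : (n : ℝ) ≠ 0 := Nat.cast_ne_zero.2 hn
  simp only [Function.comp_apply, zero_add, arcsin_zero, sub_zero, smul_eq_mul]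
  field_simp

section UnitVectors

variable {V : Type*} [NormedAddCommGroup V] [InnerProductSpace ℝ V]

theorem angle_eq_two_mul_arcsin_of_norm_eq_one {a b : V} (ha : ‖a‖ = 1) (hb : ‖b‖ = 1) :
    angle a b = 2 * arcsin (‖a - b‖ / 2) := by
  obtain ⟨d, hd⟩ : ∃ d, ‖a - b‖ = 2 * d := ⟨‖a - b‖ / 2, by ring⟩
  rw [hd, mul_div_cancel_left₀ d two_ne_zero]
  have hd0 : 0 ≤ d := by linarith [norm_nonneg (a - b)]
  have hd1 : d ≤ 1 := by linarith [norm_sub_le a b]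
  have hinner : ⟪a, b⟫ = 1 - 2 * d ^ 2 := by
    have := norm_sub_sq_real a b
    rw [ha, hb, hd] at this
    linarith
  have hcos : cos (2 * arcsin d) = 1 - 2 * d ^ 2 := by
    rw [cos_two_mul, cos_sq', sin_arcsin (by linarith) hd1]
    ring
  have h0 : 0 ≤ arcsin d := arcsin_nonneg.2 hd0
  have hπ := arcsin_le_pi_div_two d
  rw [angle, ha, hb, mul_one, div_one, hinner, ← hcos, arccos_cos (by linarith) (by linarith)]

theorem angle_le_sum_angle_succ {x : ℕ → V} (hx : x 0 ≠ 0) (n : ℕ) :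
    angle (x 0) (x n) ≤ ∑ i ∈ Finset.range n, angle (x i) (x (i + 1)) := by
  induction n with
  | zero => simp [angle_self hx]
  | succ n ih =>
    rw [Finset.sum_range_succ]
    exact (angle_le_angle_add_angle _ (x n) _).trans (by gcongr)

theorem angle_le_two_mul_arcsin_dist_of_lipschitzOnWith {α : Type*} [PseudoMetricSpace α]
    {f : α → V} {s : Set α} (hf : LipschitzOnWith 1 f s) (hnorm : ∀ x ∈ s, ‖f x‖ = 1) {x y : α}
    (hx : x ∈ s) (hy : y ∈ s) : angle (f x) (f y) ≤ 2 * arcsin (dist x y / 2) := by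
  rw [angle_eq_two_mul_arcsin_of_norm_eq_one (hnorm x hx) (hnorm y hy), ← dist_eq_norm]
  gcongr
  simpa using hf.dist_le_mul x hx y hy

theorem angle_le_two_mul_nat_mul_arcsin_of_lipschitzOnWith {f : ℝ → V} {s : Set ℝ}
    (hs : s.OrdConnected) (hf : LipschitzOnWith 1 f s) (hnorm : ∀ x ∈ s, ‖f x‖ = 1) {u v : ℝ}
    (hu : u ∈ s) (hv : v ∈ s) (huv : u ≤ v) {n : ℕ} (hn : n ≠ 0) :
    angle (f u) (f v) ≤ 2 * (n * arcsin ((v - u) / 2 / n)) := by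
  have hn' : (0 : ℝ) < n := Nat.cast_pos.2 (Nat.pos_of_ne_zero hn)
  set h := (v - u) / n with h_def
  have hh : 0 ≤ h := div_nonneg (sub_nonneg.2 huv) hn'.le
  have hmem : ∀ i ≤ n, u + i * h ∈ s := fun i hi => hs.out hu hv
    ⟨by nlinarith, by
      have : (i : ℝ) * h ≤ n * h := by gcongr
      rw [mul_div_cancel₀ _ hn'.ne'] at this
      linarith⟩
  have hend : u + n * h = v := by rw [mul_div_cancel₀ _ hn'.ne']; ring
  calc angle (f u) (f v) = angle (f (u + (0 : ℕ) * h)) (f (u + n * h)) := by simp [hend]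
    _ ≤ ∑ i ∈ Finset.range n, angle (f (u + i * h)) (f (u + (i + 1 : ℕ) * h)) :=
      angle_le_sum_angle_succ (x := fun i : ℕ => f (u + i * h))
        (by simp [← norm_ne_zero_iff, hnorm u hu]) n
    _ ≤ ∑ i ∈ Finset.range n, 2 * arcsin ((v - u) / 2 / n) := by
      refine Finset.sum_le_sum fun i hi => ?_
      have hi := Finset.mem_range.1 hi
      refine (angle_le_two_mul_arcsin_dist_of_lipschitzOnWith hf hnorm
        (hmem i hi.le) (hmem (i + 1) hi)).trans_eq ?_
      rw [Real.dist_eq, abs_sub_comm, abs_of_nonneg (by push_cast; nlinarith), h_def]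
      congr 2
      push_cast
      ring
    _ = 2 * (n * arcsin ((v - u) / 2 / n)) := by
      rw [Finset.sum_const, Finset.card_range, nsmul_eq_mul]
      ring

theorem angle_le_dist_of_lipschitzOnWith {f : ℝ → V} {s : Set ℝ} (hs : s.OrdConnected)
    (hf : LipschitzOnWith 1 f s) (hnorm : ∀ x ∈ s, ‖f x‖ = 1) {u v : ℝ} (hu : u ∈ s)
    (hv : v ∈ s) : angle (f u) (f v) ≤ dist u v := by
  wlog huv : u ≤ v generalizing u v
  · rw [angle_comm, dist_comm]
    exact this hv hu (le_of_not_ge huv)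
  have hlim := (tendsto_nat_mul_arcsin_div ((v - u) / 2)).const_mul 2
  rw [mul_div_cancel₀ _ two_ne_zero] at hlim
  rw [Real.dist_eq, abs_sub_comm, abs_of_nonneg (sub_nonneg.2 huv)]
  exact ge_of_tendsto hlim ((eventually_ne_atTop 0).mono fun n hn =>
    angle_le_two_mul_nat_mul_arcsin_of_lipschitzOnWith hs hf hnorm hu hv huv hn)

theorem cos_sub_le_inner_of_lipschitzOnWith {f : ℝ → V} {s : Set ℝ} (hs : s.OrdConnected)
    (hf : LipschitzOnWith 1 f s) (hnorm : ∀ x ∈ s, ‖f x‖ = 1) {u v : ℝ} (hu : u ∈ s)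
    (hv : v ∈ s) (huv : dist u v ≤ π) : cos (v - u) ≤ ⟪f u, f v⟫ :=
  calc cos (v - u) = cos (dist u v) := by rw [dist_comm, Real.dist_eq, cos_abs]
    _ ≤ cos (angle (f u) (f v)) := cos_le_cos_of_nonneg_of_le_pi (angle_nonneg _ _) huv
      (angle_le_dist_of_lipschitzOnWith hs hf hnorm hu hv)
    _ = ⟪f u, f v⟫ := by rw [cos_angle, hnorm u hu, hnorm v hv, mul_one, div_one]

end UnitVectors

namespace BCPath

variable {γ γ' : ℝ → Pt} {s : ℝ}

theorem integral_deriv_eq_sub (h : BCPath γ γ' s) : ∫ t in (0:ℝ)..s, γ' t = γ s - γ 0 :=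
  intervalIntegral.integral_eq_sub_of_hasDeriv_right_of_le h.nonneg
    (fun t ht => (h.hasDeriv t ht).continuousWithinAt)
    (fun t ht => ((h.hasDeriv t (Ioo_subset_Icc_self ht)).hasDerivAt
      (Icc_mem_nhds ht.1 ht.2)).hasDerivWithinAt)
    (h.contDeriv.intervalIntegrable_of_Icc h.nonneg)

theorem two_mul_sin_half_le_inner (h : BCPath γ γ' s) (hs : s ≤ 2 * π) :
    2 * sin (s / 2) ≤ ⟪γ' (s / 2), γ s - γ 0⟫ := by
  have hmid : s / 2 ∈ Icc 0 s := ⟨by linarith [h.nonneg], by linarith [h.nonneg]⟩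
  have hint : IntervalIntegrable γ' MeasureTheory.volume 0 s :=
    h.contDeriv.intervalIntegrable_of_Icc h.nonneg
  calc 2 * sin (s / 2) = ∫ t in (0:ℝ)..s, cos (t - s / 2) := by
        rw [intervalIntegral.integral_comp_sub_right (fun t => cos t), integral_cos,
          zero_sub, sin_neg, sub_half]
        ring
    _ ≤ ∫ t in (0:ℝ)..s, ⟪γ' (s / 2), γ' t⟫ := by
      refine intervalIntegral.integral_mono_on h.nonneg
        (by apply Continuous.intervalIntegrable; fun_prop)
        ((continuousOn_const.inner h.contDeriv).intervalIntegrable_of_Icc h.nonneg) fun t ht => ?_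
      refine cos_sub_le_inner_of_lipschitzOnWith ordConnected_Icc h.lipDeriv h.unitSpeed hmid ht ?_
      rw [Real.dist_eq, abs_le]
      constructor <;> linarith [ht.1, ht.2]
    _ = ⟪γ' (s / 2), γ s - γ 0⟫ := by
      rw [← h.integral_deriv_eq_sub]
      exact (innerSL ℝ (γ' (s / 2))).intervalIntegral_comp_comm hint

end BCPath

theorem closed_bcpath_length_ge_two_pi_general (γ γ' : ℝ → Pt) (s : ℝ)
    (h : BCPath γ γ' s) (hs : 0 < s)
    (hclosed : γ 0 = γ s) :
    2 * Real.pi ≤ s := by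
  by_contra! hlt
  have hsin : 0 < sin (s / 2) := sin_pos_of_pos_of_lt_pi (by linarith) (by linarith)
  have hle := h.two_mul_sin_half_le_inner hlt.le
  rw [← hclosed, sub_self, inner_zero_right] at hle
  linarith

/-- Every closed bounded curvature path has length at least `2π`. -/
theorem closed_bcpath_length_ge_two_pi (γ γ' : ℝ → Pt) (s : ℝ)
    (h : BCPath γ γ' s) (hs : 0 < s)
    (hclosed : γ 0 = γ s) (hclosed' : γ' 0 = γ' s) :
    2 * Real.pi ≤ s :=
  closed_bcpath_length_ge_two_pi_general γ γ' s h hs hclosed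
end
end

section
/- No closed bounded curvature path lies in the interior of a unit radius disk: if γ : [0,s] → ℝ² is continuously differentiable with ‖γ'(t)‖ = 1 for all t, γ' is 1-Lipschitz, s > 0, γ(0) = γ(s) and γ'(0) = γ'(s), then there is no point c ∈ ℝ² such that γ(t) lies in the open ball of radius 1 centred at c for all t ∈ [0,s]. -/
open Real Set

noncomputable section

/-! At a farthest point `t₀` of the path from `c`, at distance `r < 1`, the 1-Lipschitz tangent
gives `‖γ t - γ t₀ - (t - t₀) • γ' t₀‖ ≤ (t - t₀) ^ 2 / 2`, and comparing `‖γ t - c‖ ≤ r` with this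
yields `h ⟪γ t₀ - c, γ' t₀⟫ ≤ h ^ 2 (r - 1 + h ^ 2 / 4) / 2 < 0` for every small `h = t - t₀ ≠ 0`.
Because the path is closed, from the farthest point one can move both forward and backward
along it, so this inner product would be both negative and positive. -/

open scoped NNReal RealInnerProductSpace

section Taylor

variable {E : Type*} [NormedAddCommGroup E] [NormedSpace ℝ E] {f f' : ℝ → E} {K : ℝ≥0}

theorem norm_sub_sub_smul_le_of_lipschitzOnWith_left {a b : ℝ}
    (hf : ∀ t ∈ Icc a b, HasDerivWithinAt f (f' t) (Icc a b) t)
    (hf' : LipschitzOnWith K f' (Icc a b)) (hab : a ≤ b) :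
    ‖f b - f a - (b - a) • f' a‖ ≤ K * (b - a) ^ 2 / 2 := by
  have hg : ∀ t ∈ Icc a b, HasDerivWithinAt (fun t => f t - f a - (t - a) • f' a)
      (f' t - f' a) (Icc a b) t := fun t ht => by
    have := ((hf t ht).sub_const (f a)).sub
      (((hasDerivWithinAt_id t _).sub_const a).smul_const (f' a))
    rwa [one_smul] at this
  have hB : ∀ t, HasDerivAt (fun t => K * (t - a) ^ 2 / 2) (K * (t - a)) t := fun t => by
    have := ((((hasDerivAt_id t).sub_const a).pow 2).const_mul (K : ℝ)).div_const 2
    exact this.congr_deriv (by simp only [id]; ring)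
  have bound : ∀ t ∈ Ico a b, ‖f' t - f' a‖ ≤ K * (t - a) := fun t ht => by
    have := hf'.dist_le_mul t (Ico_subset_Icc_self ht) a (left_mem_Icc.2 hab)
    rwa [dist_eq_norm, Real.dist_eq, abs_of_nonneg (sub_nonneg.2 ht.1)] at this
  refine image_norm_le_of_norm_deriv_right_le_deriv_boundary
    (fun t ht => (hg t ht).continuousWithinAt)
    (fun t ht => (hg t (Ico_subset_Icc_self ht)).mono_of_mem_nhdsWithin (Icc_mem_nhdsGE_of_mem ht))
    (by simp) hB bound (right_mem_Icc.2 hab)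

theorem norm_sub_sub_smul_le_of_lipschitzOnWith_right {a b : ℝ}
    (hf : ∀ t ∈ Icc a b, HasDerivWithinAt f (f' t) (Icc a b) t)
    (hf' : LipschitzOnWith K f' (Icc a b)) (hab : a ≤ b) :
    ‖f a - f b - (a - b) • f' b‖ ≤ K * (b - a) ^ 2 / 2 := by
  have hneg : MapsTo Neg.neg (Icc (-b) (-a)) (Icc a b) := fun t ht =>
    ⟨le_neg_of_le_neg ht.2, neg_le_of_neg_le ht.1⟩
  have hg : ∀ t ∈ Icc (-b) (-a),
      HasDerivWithinAt (fun t => f (-t)) (-f' (-t)) (Icc (-b) (-a)) t := fun t ht => by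
    simpa using! (hf (-t) (hneg ht)).scomp t (hasDerivWithinAt_neg t _) hneg
  have hg' : LipschitzOnWith K (fun t => -f' (-t)) (Icc (-b) (-a)) := by
    refine LipschitzOnWith.of_dist_le_mul fun x hx y hy => ?_
    simpa only [dist_neg_neg] using hf'.dist_le_mul (-x) (hneg hx) (-y) (hneg hy)
  have := norm_sub_sub_smul_le_of_lipschitzOnWith_left hg hg' (neg_le_neg hab)
  rwa [neg_neg, neg_neg, neg_sub_neg, smul_neg, ← neg_smul, neg_sub] at this

theorem norm_sub_sub_smul_le_of_lipschitzOnWith {p q a b : ℝ}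
    (hf : ∀ t ∈ Icc p q, HasDerivWithinAt f (f' t) (Icc p q) t)
    (hf' : LipschitzOnWith K f' (Icc p q)) (ha : a ∈ Icc p q) (hb : b ∈ Icc p q) :
    ‖f b - f a - (b - a) • f' a‖ ≤ K * (b - a) ^ 2 / 2 := by
  rcases le_total a b with hab | hba
  · have hsub : Icc a b ⊆ Icc p q := Icc_subset_Icc ha.1 hb.2
    exact norm_sub_sub_smul_le_of_lipschitzOnWith_left
      (fun t ht => (hf t (hsub ht)).mono hsub) (hf'.mono hsub) hab
  · have hsub : Icc b a ⊆ Icc p q := Icc_subset_Icc hb.1 ha.2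
    calc ‖f b - f a - (b - a) • f' a‖ ≤ K * (a - b) ^ 2 / 2 :=
          norm_sub_sub_smul_le_of_lipschitzOnWith_right
            (fun t ht => (hf t (hsub ht)).mono hsub) (hf'.mono hsub) hba
      _ = K * (b - a) ^ 2 / 2 := by ring

end Taylor

theorem mul_inner_neg_of_norm_add_smul_le {F : Type*} [NormedAddCommGroup F]
    [InnerProductSpace ℝ F] {d X : F} {h : ℝ} (hX : ‖X‖ = 1) (hh : h ≠ 0)
    (hle : ‖d + h • X‖ ≤ ‖d‖ + h ^ 2 / 2) (hsmall : ‖d‖ + h ^ 2 / 4 < 1) :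
    h * ⟪d, X⟫ < 0 := by
  have hexpand : ‖d + h • X‖ ^ 2 = ‖d‖ ^ 2 + 2 * (h * ⟪d, X⟫) + h ^ 2 := by
    rw [norm_add_sq_real, real_inner_smul_right, norm_smul, hX, Real.norm_eq_abs, mul_one, sq_abs]
  have hsq : ‖d + h • X‖ ^ 2 ≤ (‖d‖ + h ^ 2 / 2) ^ 2 :=
    pow_le_pow_left₀ (norm_nonneg _) hle 2
  have hh2 : 0 < h ^ 2 := by positivity
  nlinarith

theorem exists_mem_Ico_apply_eq {α : Type*} {φ : ℝ → α} {s t : ℝ} (hs : 0 < s)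
    (hφ : φ 0 = φ s) (ht : t ∈ Icc 0 s) : ∃ u ∈ Ico 0 s, φ u = φ t := by
  rcases ht.2.lt_or_eq with hlt | rfl
  · exact ⟨t, ⟨ht.1, hlt⟩, rfl⟩
  · exact ⟨0, ⟨le_rfl, hs⟩, hφ⟩

theorem exists_mem_Ioc_apply_eq {α : Type*} {φ : ℝ → α} {s t : ℝ} (hs : 0 < s)
    (hφ : φ 0 = φ s) (ht : t ∈ Icc 0 s) : ∃ v ∈ Ioc 0 s, φ v = φ t := by
  rcases ht.1.lt_or_eq with hlt | rfl
  · exact ⟨t, ⟨hlt, ht.2⟩, rfl⟩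
  · exact ⟨s, ⟨hs, le_rfl⟩, hφ.symm⟩

namespace BCPath

variable {γ γ' : ℝ → Pt} {s : ℝ}

theorem norm_sub_sub_smul_le (h : BCPath γ γ' s) {a b : ℝ} (ha : a ∈ Icc 0 s)
    (hb : b ∈ Icc 0 s) : ‖γ b - γ a - (b - a) • γ' a‖ ≤ (b - a) ^ 2 / 2 := by
  simpa using norm_sub_sub_smul_le_of_lipschitzOnWith h.hasDeriv h.lipDeriv ha hb

theorem sub_mul_inner_neg_of_norm_le (h : BCPath γ γ' s) {c : Pt} {t₀ t : ℝ}
    (ht₀ : t₀ ∈ Icc 0 s) (ht : t ∈ Icc 0 s) (hne : t ≠ t₀)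
    (hle : ‖γ t - c‖ ≤ ‖γ t₀ - c‖)
    (hsmall : ‖γ t₀ - c‖ + (t - t₀) ^ 2 / 4 < 1) :
    (t - t₀) * ⟪γ t₀ - c, γ' t₀⟫ < 0 := by
  refine mul_inner_neg_of_norm_add_smul_le (h.unitSpeed t₀ ht₀) (sub_ne_zero.2 hne) ?_ hsmall
  calc ‖γ t₀ - c + (t - t₀) • γ' t₀‖
        = ‖(γ t - c) - (γ t - γ t₀ - (t - t₀) • γ' t₀)‖ := by congr 1; abel
    _ ≤ ‖γ t - c‖ + ‖γ t - γ t₀ - (t - t₀) • γ' t₀‖ := norm_sub_le _ _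
    _ ≤ ‖γ t₀ - c‖ + (t - t₀) ^ 2 / 2 := add_le_add hle (h.norm_sub_sub_smul_le ht₀ ht)

theorem inner_neg_of_isMaxOn (h : BCPath γ γ' s) {c : Pt} {u : ℝ} (hu : u ∈ Ico 0 s)
    (hmax : IsMaxOn (fun t => ‖γ t - c‖) (Icc 0 s) u) (hr : ‖γ u - c‖ < 1) :
    ⟪γ u - c, γ' u⟫ < 0 := by
  set δ := min (s - u) (1 - ‖γ u - c‖)
  have hδ : 0 < δ := lt_min (by linarith [hu.2]) (by linarith)
  have hδs : δ ≤ s - u := min_le_left _ _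
  have hδr : δ ≤ 1 - ‖γ u - c‖ := min_le_right _ _
  have ht : u + δ ∈ Icc 0 s := ⟨by linarith [hu.1], by linarith⟩
  have key := h.sub_mul_inner_neg_of_norm_le (Ico_subset_Icc_self hu) ht (by linarith)
    (hmax ht)
    (by rw [add_sub_cancel_left]; nlinarith [norm_nonneg (γ u - c)])
  rw [add_sub_cancel_left] at key
  exact neg_of_mul_neg_right key hδ.le

theorem inner_pos_of_isMaxOn (h : BCPath γ γ' s) {c : Pt} {v : ℝ} (hv : v ∈ Ioc 0 s)
    (hmax : IsMaxOn (fun t => ‖γ t - c‖) (Icc 0 s) v) (hr : ‖γ v - c‖ < 1) :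
    0 < ⟪γ v - c, γ' v⟫ := by
  set δ := min v (1 - ‖γ v - c‖)
  have hδ : 0 < δ := lt_min hv.1 (by linarith)
  have hδv : δ ≤ v := min_le_left _ _
  have hδr : δ ≤ 1 - ‖γ v - c‖ := min_le_right _ _
  have ht : v - δ ∈ Icc 0 s := ⟨by linarith, by linarith [hv.2]⟩
  have key := h.sub_mul_inner_neg_of_norm_le (Ioc_subset_Icc_self hv) ht (by linarith)
    (hmax ht)
    (by rw [sub_sub_cancel_left, neg_sq]; nlinarith [norm_nonneg (γ v - c)])
  rw [sub_sub_cancel_left, neg_mul] at key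
  exact pos_of_mul_pos_right (neg_neg_iff_pos.1 key) hδ.le

end BCPath

/-- No closed bounded curvature path lies in the interior of a unit radius disk. -/
theorem closed_bcpath_not_in_open_unit_disk (γ γ' : ℝ → Pt) (s : ℝ)
    (h : BCPath γ γ' s) (hs : 0 < s)
    (hclosed : γ 0 = γ s) (hclosed' : γ' 0 = γ' s) :
    ¬ ∃ c : Pt, ∀ t ∈ Icc (0:ℝ) s, γ t ∈ Metric.ball c 1 := by
  rintro ⟨c, hc⟩
  have hcont : ContinuousOn (fun t => ‖γ t - c‖) (Icc 0 s) := fun t ht =>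
    ((h.hasDeriv t ht).continuousWithinAt.sub continuousWithinAt_const).norm
  obtain ⟨t₀, ht₀, hmax⟩ := isCompact_Icc.exists_isMaxOn (nonempty_Icc.2 hs.le) hcont
  have hr : ‖γ t₀ - c‖ < 1 := by simpa [dist_eq_norm] using hc t₀ ht₀
  have hφ : (γ 0, γ' 0) = (γ s, γ' s) := by rw [hclosed, hclosed']
  obtain ⟨u, hu, huγ⟩ := exists_mem_Ico_apply_eq (φ := fun t => (γ t, γ' t)) hs hφ ht₀
  obtain ⟨v, hv, hvγ⟩ := exists_mem_Ioc_apply_eq (φ := fun t => (γ t, γ' t)) hs hφ ht₀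
  simp only [Prod.ext_iff] at huγ hvγ
  have hforward := h.inner_neg_of_isMaxOn hu
    (isMaxOn_iff.2 fun t ht => huγ.1 ▸ isMaxOn_iff.1 hmax t ht) (huγ.1 ▸ hr)
  have hbackward := h.inner_pos_of_isMaxOn hv
    (isMaxOn_iff.2 fun t ht => hvγ.1 ▸ isMaxOn_iff.1 hmax t ht) (hvγ.1 ▸ hr)
  rw [huγ.1, huγ.2] at hforward
  rw [hvγ.1, hvγ.2] at hbackward
  exact hforward.not_gt hbackward
end
end

section
/- Every closed bounded curvature path has a pair of points at distance at least 2: if γ : [0,s] → ℝ² is continuously differentiable with ‖γ'(t)‖ = 1 for all t, γ' is 1-Lipschitz, s > 0, γ(0) = γ(s) and γ'(0) = γ'(s), then there exist t₁, t₂ ∈ [0,s] with ‖γ(t₁) − γ(t₂)‖ ≥ 2. -/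
open Real Set

noncomputable section

/-!
The unit tangent `γ'` is 1-Lipschitz, so it turns by an angle of at most `|t - r|` between times
`r` and `t`: the angle to a fixed tangent has upper right Dini derivative at most
`lim 2 arcsin(h/2)/h = 1`. Hence on a stretch of length `ℓ ≤ π` the tangent at its midpoint `m`
makes an angle at most `|t - m|` with `γ' t`, so `⟪γ' m, γ t⟫ - sin (t - m)` is monotone, which
gives the chord bound `‖γ ℓ - γ 0‖ ≥ 2 sin (ℓ / 2)`. A closed path of length `s < π` would have
chord `0 ≥ 2 sin (s / 2) > 0`; otherwise `ℓ = π` gives two points at distance at least 2.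
-/

open Filter InnerProductGeometry
open scoped RealInnerProductSpace

section

variable {E : Type*} [NormedAddCommGroup E] [InnerProductSpace ℝ E]

theorem norm_sub_eq_two_mul_sin_angle_div_two {u w : E} (hu : ‖u‖ = 1) (hw : ‖w‖ = 1) :
    ‖u - w‖ = 2 * sin (angle u w / 2) := by
  have hcos := norm_sub_sq_eq_norm_sq_add_norm_sq_sub_two_mul_norm_mul_norm_mul_cos_angle u w
  have hhalf : cos (angle u w) = 1 - 2 * sin (angle u w / 2) ^ 2 := by
    conv_lhs => rw [← mul_div_cancel₀ (angle u w) two_ne_zero, cos_two_mul, cos_sq']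
    ring
  have hsin : 0 ≤ sin (angle u w / 2) :=
    sin_nonneg_of_nonneg_of_le_pi (by linarith [angle_nonneg u w])
      (by linarith [angle_le_pi u w, pi_pos])
  rw [hu, hw, hhalf] at hcos
  nlinarith [norm_nonneg (u - w)]

theorem angle_le_two_mul_arcsin_of_norm_sub_le {u w : E} (hu : ‖u‖ = 1) (hw : ‖w‖ = 1) {h : ℝ}
    (hh : ‖u - w‖ ≤ h) : angle u w ≤ 2 * arcsin (h / 2) := by
  have hhalf : angle u w / 2 = arcsin (‖u - w‖ / 2) := by
    rw [norm_sub_eq_two_mul_sin_angle_div_two hu hw, mul_div_cancel_left₀ _ two_ne_zero,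
      arcsin_sin] <;> linarith [angle_nonneg u w, angle_le_pi u w, pi_pos]
  linarith [arcsin_le_arcsin (div_le_div_of_nonneg_right hh zero_le_two)]

theorem hasDerivAt_two_mul_arcsin_sub_div_two (x : ℝ) :
    HasDerivAt (fun z => 2 * arcsin ((z - x) / 2)) 1 x := by
  have h := ((hasDerivAt_arcsin (by norm_num) (by norm_num)).comp x
    (((hasDerivAt_id x).sub_const x).div_const 2)).const_mul 2
  simpa using h

theorem angle_le_sub_of_lipschitzOnWith {v : ℝ → E} {a b : ℝ}
    (hv : LipschitzOnWith 1 v (Icc a b)) (hunit : ∀ t ∈ Icc a b, ‖v t‖ = 1) (hab : a ≤ b) :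
    angle (v a) (v b) ≤ b - a := by
  have ha : a ∈ Icc a b := left_mem_Icc.2 hab
  have hne : ∀ t ∈ Icc a b, v t ≠ 0 := fun t ht => norm_ne_zero_iff.1 (by simp [hunit t ht])
  have hcont : ContinuousOn (fun t => angle (v a) (v t)) (Icc a b) := fun t ht =>
    (continuousAt_angle (x := (v a, v t)) (hne a ha) (hne t ht)).comp_continuousWithinAt
      (f := fun t => (v a, v t)) (continuousWithinAt_const.prodMk (hv.continuousOn t ht))
  refine image_le_of_liminf_slope_right_le_deriv_boundary hcont (B := fun t => t - a)
    (by simp [angle_self (hne a ha)]) (by fun_prop)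
    (fun x _ => (hasDerivWithinAt_id x _).sub_const a) ?_ (right_mem_Icc.2 hab)
  intro x hx r hr
  have hψ := (hasDerivAt_iff_tendsto_slope.1 (hasDerivAt_two_mul_arcsin_sub_div_two x)).mono_left
    (nhdsGT_le_nhdsNE x)
  refine Eventually.frequently ?_
  filter_upwards [hψ.eventually (gt_mem_nhds hr), Ioc_mem_nhdsGT hx.2] with z hzr hz
  have hxI : x ∈ Icc a b := Ico_subset_Icc_self hx
  have hzI : z ∈ Icc a b := ⟨hx.1.trans hz.1.le, hz.2⟩
  have hchord : ‖v x - v z‖ ≤ z - x := by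
    simpa [dist_eq_norm, abs_of_neg (sub_neg.2 hz.1)] using hv.dist_le_mul x hxI z hzI
  have hincr : angle (v a) (v z) - angle (v a) (v x) ≤ 2 * arcsin ((z - x) / 2) := by
    linarith [angle_le_angle_add_angle (v a) (v x) (v z),
      angle_le_two_mul_arcsin_of_norm_sub_le (hunit x hxI) (hunit z hzI) hchord]
  refine lt_of_le_of_lt ?_ hzr
  simp only [slope_def_field, sub_self, zero_div, arcsin_zero, mul_zero, sub_zero]
  exact div_le_div_of_nonneg_right hincr (sub_nonneg.2 hz.1.le)

theorem cos_sub_le_inner_of_lipschitzOnWith_s2 {v : ℝ → E} {a b : ℝ}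
    (hv : LipschitzOnWith 1 v (Icc a b)) (hunit : ∀ t ∈ Icc a b, ‖v t‖ = 1) (hab : a ≤ b)
    (hπ : b - a ≤ π) : cos (b - a) ≤ ⟪v a, v b⟫ := by
  have hcos := cos_angle (v a) (v b)
  rw [hunit a (left_mem_Icc.2 hab), hunit b (right_mem_Icc.2 hab), mul_one, div_one] at hcos
  rw [← hcos]
  exact cos_le_cos_of_nonneg_of_le_pi (angle_nonneg _ _) hπ
    (angle_le_sub_of_lipschitzOnWith hv hunit hab)

theorem two_mul_sin_half_le_inner_sub {γ γ' : ℝ → E} {a b : ℝ}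
    (hγ : ∀ t ∈ Icc a b, HasDerivWithinAt γ (γ' t) (Icc a b) t)
    (hunit : ∀ t ∈ Icc a b, ‖γ' t‖ = 1) (hlip : LipschitzOnWith 1 γ' (Icc a b))
    (hab : a ≤ b) (hπ : b - a ≤ π) :
    2 * sin ((b - a) / 2) ≤ ⟪γ' ((a + b) / 2), γ b - γ a⟫ := by
  set m := (a + b) / 2 with hm_def
  have hm : m ∈ Icc a b := ⟨by linarith, by linarith⟩
  have hcos : ∀ t ∈ Icc a b, cos (t - m) ≤ ⟪γ' m, γ' t⟫ := by
    intro t ht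
    rcases le_total t m with htm | hmt
    · rw [← cos_neg, neg_sub, real_inner_comm]
      exact cos_sub_le_inner_of_lipschitzOnWith_s2 (hlip.mono (Icc_subset_Icc ht.1 hm.2))
        (fun r hr => hunit r ⟨ht.1.trans hr.1, hr.2.trans hm.2⟩) htm (by linarith [ht.1])
    · exact cos_sub_le_inner_of_lipschitzOnWith_s2 (hlip.mono (Icc_subset_Icc hm.1 ht.2))
        (fun r hr => hunit r ⟨hm.1.trans hr.1, hr.2.trans ht.2⟩) hmt (by linarith [ht.2])
  have hmono : MonotoneOn (fun t => ⟪γ' m, γ t⟫ - sin (t - m)) (Icc a b) := by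
    refine monotoneOn_of_hasDerivWithinAt_nonneg (convex_Icc a b)
      ((continuousOn_const.inner fun t ht => (hγ t ht).continuousWithinAt).sub (by fun_prop))
      (f' := fun t => ⟪γ' m, γ' t⟫ - cos (t - m)) (fun t ht => ?_)
      (fun t ht => sub_nonneg.2 (hcos t (interior_subset ht)))
    rw [interior_Icc] at ht ⊢
    have hinner := (hasDerivWithinAt_const t (Ioo a b) (γ' m)).inner ℝ
      ((hγ t (Ioo_subset_Icc_self ht)).mono Ioo_subset_Icc_self)
    simp only [inner_zero_left, add_zero] at hinner
    have hsin : HasDerivWithinAt (fun t => sin (t - m)) (cos (t - m)) (Ioo a b) t := by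
      simpa using ((hasDerivAt_id t).sub_const m).sin.hasDerivWithinAt
    exact hinner.fun_sub hsin
  have hend := hmono (left_mem_Icc.2 hab) (right_mem_Icc.2 hab) hab
  have hsin_a : sin (a - m) = - sin ((b - a) / 2) := by rw [← sin_neg]; congr 1; ring
  have hsin_b : sin (b - m) = sin ((b - a) / 2) := by congr 1; ring
  simp only [hsin_a, hsin_b] at hend
  rw [inner_sub_right]
  linarith

end

theorem BCPath.two_mul_sin_half_le_norm_sub {γ γ' : ℝ → Pt} {s ℓ : ℝ} (h : BCPath γ γ' s)
    (hℓ : 0 ≤ ℓ) (hℓs : ℓ ≤ s) (hℓπ : ℓ ≤ π) : 2 * sin (ℓ / 2) ≤ ‖γ ℓ - γ 0‖ := by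
  have hsub : Icc 0 ℓ ⊆ Icc 0 s := Icc_subset_Icc le_rfl hℓs
  have hchord := two_mul_sin_half_le_inner_sub
    (fun t ht => (h.hasDeriv t (hsub ht)).mono hsub) (fun t ht => h.unitSpeed t (hsub ht))
    (h.lipDeriv.mono hsub) hℓ (by linarith)
  have hu : ‖γ' ((0 + ℓ) / 2)‖ = 1 := h.unitSpeed _ (hsub ⟨by linarith, by linarith⟩)
  have hle := real_inner_le_norm (γ' ((0 + ℓ) / 2)) (γ ℓ - γ 0)
  rw [hu, one_mul] at hle
  rw [sub_zero] at hchord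
  linarith

theorem closed_bcpath_exists_points_dist_ge_two_general (γ γ' : ℝ → Pt) (s : ℝ)
    (h : BCPath γ γ' s) (hs : 0 < s)
    (hclosed : γ 0 = γ s) :
    ∃ t₁ ∈ Icc (0:ℝ) s, ∃ t₂ ∈ Icc (0:ℝ) s, 2 ≤ ‖γ t₁ - γ t₂‖ := by
  rcases lt_or_ge s π with hsπ | hπs
  · have hchord := h.two_mul_sin_half_le_norm_sub hs.le le_rfl hsπ.le
    rw [← hclosed, sub_self, norm_zero] at hchord
    have hpos := sin_pos_of_pos_of_lt_pi (half_pos hs) (by linarith)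
    linarith
  · refine ⟨π, ⟨pi_pos.le, hπs⟩, 0, ⟨le_rfl, h.nonneg⟩, ?_⟩
    simpa using h.two_mul_sin_half_le_norm_sub pi_pos.le hπs le_rfl

/-- Every closed bounded curvature path has a pair of points at distance at least 2. -/
theorem closed_bcpath_exists_points_dist_ge_two (γ γ' : ℝ → Pt) (s : ℝ)
    (h : BCPath γ γ' s) (hs : 0 < s)
    (hclosed : γ 0 = γ s) (hclosed' : γ' 0 = γ' s) :
    ∃ t₁ ∈ Icc (0:ℝ) s, ∃ t₂ ∈ Icc (0:ℝ) s, 2 ≤ ‖γ t₁ - γ t₂‖ :=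
  closed_bcpath_exists_points_dist_ge_two_general γ γ' s h hs hclosed
end
end

section
/- Let γ : [0,s] → ℝ² be a continuously differentiable curve with ‖γ(t)‖ ≥ 1 for all t ∈ [0,s], and let θ : [0,s] → ℝ be a continuous angular lift of γ, i.e. γ(t) = ‖γ(t)‖·(cos θ(t), sin θ(t)) for all t. Then the length of γ satisfies ∫₀ˢ ‖γ'(t)‖ dt ≥ |θ(s) − θ(0)|. -/
open Real Set

noncomputable section

/-! Identify the plane with `ℂ`. Integrating the logarithmic derivative `z'/z` gives a continuous
logarithm `Λ` with `z = z(0) · exp Λ`, since both sides solve the same linear ODE. Then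
`θ(0) + Im Λ` is a second continuous lift of `z / |z|`; two continuous lifts differ by a
continuous function with values in `2πℤ`, so they coincide, and `θ(s) - θ(0) = ∫ Im (z'/z)`.
Finally `|Im (z'/z)| ≤ |z'| / |z| ≤ |z'|` because `|z| ≥ 1`. -/

open Complex

theorem eq_mul_exp_integral_of_hasDerivWithinAt {z g : ℝ → ℂ} {a b : ℝ} (hg : Continuous g)
    (hz : ∀ t ∈ Icc a b, HasDerivWithinAt z (g t * z t) (Icc a b) t) :
    ∀ t ∈ Icc a b, z t = z a * exp (∫ u in a..t, g u) := by
  set Λ : ℝ → ℂ := fun t => ∫ u in a..t, g u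
  have hΛ : ∀ t, HasDerivAt Λ (g t) t := fun t => (hg.integral_hasStrictDerivAt a t).hasDerivAt
  have hF : ∀ t ∈ Ico a b, HasDerivWithinAt (fun t => z t * exp (-Λ t)) 0 (Ici t) t := by
    intro t ht
    refine (((hz t (Ico_subset_Icc_self ht)).mul (hΛ t).hasDerivWithinAt.neg.cexp).congr_deriv
      (by ring)).mono_of_mem_nhdsWithin (Icc_mem_nhdsGE_of_mem ht)
  have hFc : ContinuousOn (fun t => z t * exp (-Λ t)) (Icc a b) :=
    ContinuousOn.mul (fun t ht => (hz t ht).continuousWithinAt)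
      (continuous_iff_continuousAt.mpr fun t => (hΛ t).continuousAt).neg.cexp.continuousOn
  intro t ht
  have h := constant_of_has_deriv_right_zero hFc hF t ht
  simp only [Λ, intervalIntegral.integral_same, neg_zero, Complex.exp_zero, mul_one] at h
  rw [← h, mul_assoc, ← Complex.exp_add, neg_add_cancel, Complex.exp_zero, mul_one]

theorem IsPreconnected.eqOn_of_exp_mul_I_eq {S : Set ℝ} (hS : IsPreconnected S)
    {φ ψ : ℝ → ℝ} (hφ : ContinuousOn φ S) (hψ : ContinuousOn ψ S)
    (h : ∀ t ∈ S, exp (φ t * I) = exp (ψ t * I)) {x : ℝ} (hx : x ∈ S)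
    (hxe : φ x = ψ x) :
    EqOn φ ψ S := by
  have hdiscrete : IsDiscrete (AddSubgroup.zmultiples (2 * π) : Set ℝ) :=
    isDiscrete_iff_discreteTopology.mpr
      (inferInstanceAs (DiscreteTopology (AddSubgroup.zmultiples (2 * π))))
  have hmaps : MapsTo (φ - ψ) S (AddSubgroup.zmultiples (2 * π)) := by
    intro t ht
    obtain ⟨n, hn⟩ := exp_eq_exp_iff_exists_int.mp (h t ht)
    exact ⟨n, by simpa [eq_sub_iff_add_eq'] using (congrArg im hn).symm⟩
  intro t ht
  have h := hS.constant_of_mapsTo hdiscrete (hφ.sub hψ) hmaps ht hx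
  simp only [Pi.sub_apply, hxe, sub_self] at h
  linarith

theorem mul_exp_eq_norm_mul_exp_mul_I {w Λ : ℂ} {θ : ℝ} (hw : w = ‖w‖ * exp (θ * I)) :
    w * exp Λ = ‖w * exp Λ‖ * exp ((θ + Λ.im : ℝ) * I) := by
  conv_lhs => rw [hw, ← re_add_im Λ]
  rw [norm_mul, Complex.norm_exp]
  push_cast
  rw [add_mul, Complex.exp_add, Complex.exp_add]
  ring

section Lift

variable {z z' : ℝ → ℂ} {θ : ℝ → ℝ} {a b : ℝ}

theorem sub_eq_integral_im_div_of_lift (hab : a ≤ b)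
    (hz : ∀ t ∈ Icc a b, HasDerivWithinAt z (z' t) (Icc a b) t)
    (hz' : ContinuousOn z' (Icc a b))
    (hz0 : ∀ t ∈ Icc a b, z t ≠ 0) (hθ : ContinuousOn θ (Icc a b))
    (hlift : ∀ t ∈ Icc a b, z t = ‖z t‖ * exp (θ t * I)) :
    θ b - θ a = ∫ t in a..b, (z' t / z t).im := by
  set g : ℝ → ℂ := fun u => z' (projIcc a b hab u) / z (projIcc a b hab u)
  have hzc : ContinuousOn z (Icc a b) := fun t ht => (hz t ht).continuousWithinAt
  have hg : Continuous g :=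
    (hz'.div hzc hz0).comp_continuous continuous_projIcc.subtype_val fun u => (projIcc a b hab u).2
  have hg_eq : ∀ t ∈ Icc a b, g t = z' t / z t := fun t ht => by simp [g, projIcc_of_mem hab ht]
  set Λ : ℝ → ℂ := fun t => ∫ u in a..t, g u
  have hexp : ∀ t ∈ Icc a b, z t = z a * exp (Λ t) :=
    eq_mul_exp_integral_of_hasDerivWithinAt hg fun t ht =>
      (hz t ht).congr_deriv (by rw [hg_eq t ht, div_mul_cancel₀ _ (hz0 t ht)])
  have hΛ : Continuous fun t => (Λ t).im :=
    continuous_im.comp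
      (intervalIntegral.continuous_primitive (fun _ _ => hg.intervalIntegrable _ _) a)
  have hθΛ : EqOn θ (fun t => θ a + (Λ t).im) (Icc a b) := by
    refine isPreconnected_Icc.eqOn_of_exp_mul_I_eq hθ (continuous_const.add hΛ).continuousOn
      (fun t ht => ?_) (left_mem_Icc.2 hab) (by simp [Λ])
    have h := hexp t ht
    rw [mul_exp_eq_norm_mul_exp_mul_I (hlift a (left_mem_Icc.2 hab)), ← hexp t ht] at h
    refine mul_left_cancel₀ (ofReal_ne_zero.2 (norm_ne_zero_iff.2 (hz0 t ht))) ?_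
    rw [← hlift t ht, ← h]
  rw [hθΛ (right_mem_Icc.2 hab), add_sub_cancel_left]
  calc (Λ b).im = ∫ t in a..b, (g t).im :=
        (imCLM.intervalIntegral_comp_comm (hg.intervalIntegrable a b)).symm
    _ = ∫ t in a..b, (z' t / z t).im := intervalIntegral.integral_congr fun t ht => by
        rw [uIcc_of_le hab] at ht
        simp only [hg_eq t ht]

theorem mul_abs_sub_le_integral_norm_of_lift {r : ℝ} (hab : a ≤ b)
    (hz : ∀ t ∈ Icc a b, HasDerivWithinAt z (z' t) (Icc a b) t)
    (hz' : ContinuousOn z' (Icc a b))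
    (hr : 0 < r) (hzr : ∀ t ∈ Icc a b, r ≤ ‖z t‖) (hθ : ContinuousOn θ (Icc a b))
    (hlift : ∀ t ∈ Icc a b, z t = ‖z t‖ * exp (θ t * I)) :
    r * |θ b - θ a| ≤ ∫ t in a..b, ‖z' t‖ := by
  have hz0 : ∀ t ∈ Icc a b, z t ≠ 0 := fun t ht => norm_pos_iff.1 (hr.trans_le (hzr t ht))
  have hzc : ContinuousOn z (Icc a b) := fun t ht => (hz t ht).continuousWithinAt
  rw [sub_eq_integral_im_div_of_lift hab hz hz' hz0 hθ hlift, ← abs_of_pos hr, ← abs_mul,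
    ← intervalIntegral.integral_const_mul]
  refine (intervalIntegral.abs_integral_le_integral_abs hab).trans
    (intervalIntegral.integral_mono_on hab ?_ (hz'.norm.intervalIntegrable_of_Icc hab)
      fun t ht => ?_)
  · exact (continuousOn_const.mul (continuous_im.comp_continuousOn (hz'.div hzc hz0))).abs
      |>.intervalIntegrable_of_Icc hab
  · have hzt : 0 < ‖z t‖ := hr.trans_le (hzr t ht)
    calc |r * (z' t / z t).im| ≤ r * ‖z' t / z t‖ := by
          rw [abs_mul, abs_of_pos hr]
          exact mul_le_mul_of_nonneg_left (abs_im_le_norm _) hr.le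
      _ = r / ‖z t‖ * ‖z' t‖ := by rw [norm_div]; ring
      _ ≤ 1 * ‖z' t‖ :=
          mul_le_mul_of_nonneg_right ((div_le_one hzt).2 (hzr t ht)) (norm_nonneg _)
      _ = ‖z' t‖ := one_mul _

end Lift

/-- If `γ` stays at distance at least 1 from the origin and `θ` is a continuous angular
lift of `γ`, then the length of `γ` is at least the total angle swept `|θ(s) − θ(0)|`. -/
theorem length_ge_angle_swept (γ γ' : ℝ → Pt) (θ : ℝ → ℝ) (s : ℝ) (hs : 0 ≤ s)
    (hderiv : ∀ t ∈ Icc (0:ℝ) s, HasDerivWithinAt γ (γ' t) (Icc (0:ℝ) s) t)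
    (hcont : ContinuousOn γ' (Icc (0:ℝ) s))
    (hr : ∀ t ∈ Icc (0:ℝ) s, 1 ≤ ‖γ t‖)
    (hθ : ContinuousOn θ (Icc (0:ℝ) s))
    (hlift : ∀ t ∈ Icc (0:ℝ) s,
      γ t = ‖γ t‖ • ((WithLp.equiv 2 (Fin 2 → ℝ)).symm
        ![Real.cos (θ t), Real.sin (θ t)] : Pt)) :
    |θ s - θ 0| ≤ ∫ t in (0:ℝ)..s, ‖γ' t‖ := by
  let e : Pt ≃ₗᵢ[ℝ] ℂ := orthonormalBasisOneI.repr.symm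
  have hlift' : ∀ t ∈ Icc (0:ℝ) s, e (γ t) = ‖e (γ t)‖ * exp (θ t * I) := by
    intro t ht
    rw [e.norm_map, exp_mul_I]
    conv_lhs => rw [hlift t ht]
    simp [e, orthonormalBasisOneI_repr_symm_apply, mul_add]
  have h := mul_abs_sub_le_integral_norm_of_lift (z' := e ∘ γ') hs
    (fun t ht => e.hasFDerivAt.comp_hasDerivWithinAt t (hderiv t ht))
    (e.continuous.comp_continuousOn hcont) one_pos
    (fun t ht => (hr t ht).trans_eq (e.norm_map _).symm) hθ hlift'
  simpa only [one_mul, Function.comp_apply, LinearIsometryEquiv.norm_map] using h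
end
end

section
/- A bounded curvature path making a u-turn whose endpoints are at distance less than 1 has length at least 2: if γ : [0,s] → ℝ² is continuously differentiable with ‖γ'(t)‖ = 1 for all t, γ' is 1-Lipschitz, γ'(s) = −γ'(0), and ‖γ(s) − γ(0)‖ < 1, then s ≥ 2. -/
open Real Set

noncomputable section

/- The unit tangent has to travel from `γ' 0` to `-γ' 0`, a distance of 2, and being
1-Lipschitz in arc length it needs arc length at least 2 to do so. -/
theorem LipschitzOnWith.two_mul_norm_le_of_apply_right_eq_neg {E : Type*}
    [SeminormedAddCommGroup E] [NormedSpace ℝ E] {f : ℝ → E} {a b : ℝ} (hab : a ≤ b)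
    (hf : LipschitzOnWith 1 f (Icc a b)) (hneg : f b = -f a) : 2 * ‖f a‖ ≤ b - a := by
  have hdist := hf.dist_le_mul b ⟨hab, le_rfl⟩ a ⟨le_rfl, hab⟩
  rw [dist_eq_norm, hneg, Real.dist_eq, abs_of_nonneg (sub_nonneg.mpr hab)] at hdist
  calc 2 * ‖f a‖ = ‖-f a - f a‖ := by
        rw [← neg_add', norm_neg, ← two_smul ℝ, norm_smul, Real.norm_two]
    _ ≤ b - a := by simpa using hdist

theorem uturn_length_ge_two_general (γ γ' : ℝ → Pt) (s : ℝ)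
    (h : BCPath γ γ' s)
    (huturn : γ' s = -(γ' 0)) :
    2 ≤ s := by
  have hunit : ‖γ' 0‖ = 1 := h.unitSpeed 0 ⟨le_rfl, h.nonneg⟩
  simpa [hunit] using h.lipDeriv.two_mul_norm_le_of_apply_right_eq_neg h.nonneg huturn

/-- A bounded curvature path making a u-turn whose endpoints are at distance less
than 1 has length at least 2. -/
theorem uturn_length_ge_two (γ γ' : ℝ → Pt) (s : ℝ)
    (h : BCPath γ γ' s)
    (huturn : γ' s = -(γ' 0)) (hclose : ‖γ s - γ 0‖ < 1) :
    2 ≤ s :=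
  uturn_length_ge_two_general γ γ' s h huturn
end
end

section
/- A non-degenerate cscsc path is not a path of minimal length: let γ : [0,s] → ℝ² be a bounded curvature path admitting a partition 0 = t₀ < t₁ < t₂ < t₃ < t₄ < t₅ = s such that on [t₀,t₁], [t₂,t₃], [t₄,t₅] the path is an arc of a unit-radius circle (there exists c ∈ ℝ² with ‖γ(t) − c‖ = 1 throughout) and on [t₁,t₂], [t₃,t₄] the path is affine (a line segment), all five pieces having positive length. Then γ is not a length minimiser: there exists a bounded curvature path η with η(0) = γ(0), η'(0) = γ'(0), and the same final point and final direction as γ, whose length is strictly less than s. -/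
open Real Set

noncomputable section

/-!
Only the first four pieces matter: replacing the arc–segment–arc–segment path from
`(γ 0, γ' 0)` to `(γ t₄, γ' t₄)` by a shorter bounded curvature path with the same end data,
and keeping the rest of `γ`, gives a shorter competitor. In `ℂ`, a unit-speed arc of a unit
circle turns the direction by `exp (± i θ)`, so the end of such a path is an explicit function
of the two turning signs, the arc angles `ψ`, `φ` and the segment lengths `A`, `B`.
If `φ ≥ 2π` a full loop can be cut out. If `φ = π` the two segments are antiparallel and
shortening both by `min A B` keeps the endpoint. Otherwise, lengthening the middle arc by `ε`
and changing the first one by `∓ε` keeps the final direction, and the endpoint is kept by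
adjusting `A` and `B` (a linear system of determinant `sin (φ + ε)`); the total length then has
derivative `A (1 - cos φ) / sin φ ≠ 0` at `ε = 0`, so some small `ε` shortens the path.
-/

namespace BoundedCurvature

open ComplexConjugate Filter Topology

section NormedSpace

variable {E F : Type*} [NormedAddCommGroup E] [NormedSpace ℝ E]
  [NormedAddCommGroup F] [NormedSpace ℝ F]

theorem lipschitzOnWith_Icc_of_Icc {α : Type*} [PseudoMetricSpace α] {f : ℝ → α} {K : NNReal}
    {a m b : ℝ} (hl : LipschitzOnWith K f (Icc a m)) (hr : LipschitzOnWith K f (Icc m b)) :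
    LipschitzOnWith K f (Icc a b) := by
  rw [lipschitzOnWith_iff_dist_le_mul] at *
  have key : ∀ x ∈ Icc a b, ∀ y ∈ Icc a b, x ≤ y → dist (f x) (f y) ≤ K * dist x y := by
    intro x hx y hy hxy
    by_cases hym : y ≤ m
    · exact hl x ⟨hx.1, hxy.trans hym⟩ y ⟨hy.1, hym⟩
    by_cases hxm : m ≤ x
    · exact hr x ⟨hxm, hx.2⟩ y ⟨hxm.trans hxy, hy.2⟩
    rw [not_le] at hym hxm
    calc dist (f x) (f y) ≤ dist (f x) (f m) + dist (f m) (f y) := dist_triangle _ _ _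
      _ ≤ K * dist x m + K * dist m y :=
        add_le_add (hl x ⟨hx.1, hxm.le⟩ m ⟨hx.1.trans hxm.le, le_rfl⟩)
          (hr m ⟨le_rfl, hym.le.trans hy.2⟩ y ⟨hym.le, hy.2⟩)
      _ = K * dist x y := by
        rw [Real.dist_eq, Real.dist_eq, Real.dist_eq, abs_of_neg (by linarith),
          abs_of_neg (by linarith), abs_of_nonpos (by linarith)]
        ring
  intro x hx y hy
  rcases le_total x y with hxy | hxy
  · exact key x hx y hy hxy
  · rw [dist_comm, dist_comm x]; exact key y hy x hx hxy

theorem hasDerivWithinAt_Icc_of_Icc {f f' : ℝ → E} {a m b : ℝ} (ham : a ≤ m) (hmb : m ≤ b)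
    (hl : ∀ t ∈ Icc a m, HasDerivWithinAt f (f' t) (Icc a m) t)
    (hr : ∀ t ∈ Icc m b, HasDerivWithinAt f (f' t) (Icc m b) t) :
    ∀ t ∈ Icc a b, HasDerivWithinAt f (f' t) (Icc a b) t := by
  intro t _
  rw [← Icc_union_Icc_eq_Icc ham hmb]
  refine HasDerivWithinAt.union ?_ ?_
  · by_cases ht : t ∈ Icc a m
    · exact hl t ht
    · exact HasFDerivWithinAt.of_notMem_closure (by rwa [closure_Icc])
  · by_cases ht : t ∈ Icc m b
    · exact hr t ht
    · exact HasFDerivWithinAt.of_notMem_closure (by rwa [closure_Icc])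

structure IsBCPathOn (f f' : ℝ → E) (a b : ℝ) : Prop where
  le : a ≤ b
  hasDerivWithinAt : ∀ t ∈ Icc a b, HasDerivWithinAt f (f' t) (Icc a b) t
  norm_eq_one : ∀ t ∈ Icc a b, ‖f' t‖ = 1
  lipschitzOnWith : LipschitzOnWith 1 f' (Icc a b)

namespace IsBCPathOn

variable {f f' g g' : ℝ → E} {a b m : ℝ}

theorem mono (h : IsBCPathOn f f' a b) {a' b' : ℝ} (ha : a ≤ a') (hab : a' ≤ b') (hb : b' ≤ b) :
    IsBCPathOn f f' a' b' where
  le := hab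
  hasDerivWithinAt t ht :=
    (h.hasDerivWithinAt t (Icc_subset_Icc ha hb ht)).mono (Icc_subset_Icc ha hb)
  norm_eq_one t ht := h.norm_eq_one t (Icc_subset_Icc ha hb ht)
  lipschitzOnWith := h.lipschitzOnWith.mono (Icc_subset_Icc ha hb)

theorem comp_sub_const (h : IsBCPathOn f f' a b) (c : ℝ) :
    IsBCPathOn (fun t => f (t - c)) (fun t => f' (t - c)) (a + c) (b + c) := by
  have hmaps : MapsTo (· - c) (Icc (a + c) (b + c)) (Icc a b) := fun u hu =>
    ⟨by linarith [hu.1], by linarith [hu.2]⟩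
  refine ⟨by linarith [h.le], fun t ht => ?_, fun t ht => h.norm_eq_one (t - c) (hmaps ht),
    fun x hx y hy => ?_⟩
  · simpa [Function.comp_def] using (h.hasDerivWithinAt (t - c) (hmaps ht)).scomp t
      ((hasDerivWithinAt_id t _).sub_const c) hmaps
  · simpa [edist_sub_right] using h.lipschitzOnWith (hmaps hx) (hmaps hy)

theorem map (h : IsBCPathOn f f' a b) (e : E →ₗᵢ[ℝ] F) :
    IsBCPathOn (fun t => e (f t)) (fun t => e (f' t)) a b where
  le := h.le
  hasDerivWithinAt t ht :=
    e.toContinuousLinearMap.hasFDerivAt.comp_hasDerivWithinAt t (h.hasDerivWithinAt t ht)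
  norm_eq_one t ht := by rw [e.norm_map, h.norm_eq_one t ht]
  lipschitzOnWith x hx y hy := by
    simpa [e.isometry.edist_eq] using h.lipschitzOnWith hx hy

theorem congr (h : IsBCPathOn f f' a b) (hg : EqOn g f (Icc a b)) (hg' : EqOn g' f' (Icc a b)) :
    IsBCPathOn g g' a b where
  le := h.le
  hasDerivWithinAt t ht := by
    rw [hg' ht]; exact (h.hasDerivWithinAt t ht).congr hg (hg ht)
  norm_eq_one t ht := by rw [hg' ht]; exact h.norm_eq_one t ht
  lipschitzOnWith x hx y hy := by
    rw [hg' hx, hg' hy]; exact h.lipschitzOnWith hx hy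

theorem exists_append (hf : IsBCPathOn f f' a m) (hg : IsBCPathOn g g' m b)
    (h₀ : f m = g m) (h₁ : f' m = g' m) :
    ∃ k k' : ℝ → E, IsBCPathOn k k' a b ∧ EqOn k f (Icc a m) ∧ EqOn k' f' (Icc a m) ∧
      EqOn k g (Icc m b) ∧ EqOn k' g' (Icc m b) := by
  have left {u v : ℝ → E} : EqOn (fun t => if t ≤ m then u t else v t) u (Icc a m) :=
    fun t ht => if_pos ht.2
  have right {u v : ℝ → E} (huv : u m = v m) :
      EqOn (fun t => if t ≤ m then u t else v t) v (Icc m b) := by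
    intro t ht
    rcases ht.1.eq_or_lt with rfl | hlt
    · simp [huv]
    · simp [not_le.mpr hlt]
  have hl := hf.congr (left (v := g)) (left (v := g'))
  have hr := hg.congr (right h₀) (right h₁)
  refine ⟨_, _, ⟨hf.le.trans hg.le, ?_, ?_, ?_⟩, left, left, right h₀, right h₁⟩
  · exact hasDerivWithinAt_Icc_of_Icc hf.le hg.le hl.hasDerivWithinAt hr.hasDerivWithinAt
  · intro t ht
    rcases le_total t m with htm | htm
    · exact hl.norm_eq_one t ⟨ht.1, htm⟩
    · exact hr.norm_eq_one t ⟨htm, ht.2⟩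
  · exact lipschitzOnWith_Icc_of_Icc hl.lipschitzOnWith hr.lipschitzOnWith

end IsBCPathOn

def BCJoined (ℓ : ℝ) (x X y Y : E) : Prop :=
  ∃ f f' : ℝ → E, IsBCPathOn f f' 0 ℓ ∧ f 0 = x ∧ f' 0 = X ∧ f ℓ = y ∧ f' ℓ = Y

theorem IsBCPathOn.bcJoined {f f' : ℝ → E} {a b : ℝ} (h : IsBCPathOn f f' a b) :
    BCJoined (b - a) (f a) (f' a) (f b) (f' b) :=
  ⟨_, _, by simpa [← sub_eq_add_neg] using h.comp_sub_const (-a), by simp, by simp, by simp,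
    by simp⟩

namespace BCJoined

variable {ℓ ℓ₁ ℓ₂ : ℝ} {x X y Y z Z : E}

theorem trans (h₁ : BCJoined ℓ₁ x X y Y) (h₂ : BCJoined ℓ₂ y Y z Z) :
    BCJoined (ℓ₁ + ℓ₂) x X z Z := by
  obtain ⟨f, f', hf, rfl, rfl, rfl, rfl⟩ := h₁
  obtain ⟨g, g', hg, hg₀, hg₀', rfl, rfl⟩ := h₂
  have hg' := hg.comp_sub_const ℓ₁
  rw [zero_add, add_comm] at hg'
  obtain ⟨k, k', hk, hkf, hkf', hkg, hkg'⟩ := hf.exists_append hg' (by simp [hg₀]) (by simp [hg₀'])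
  have h0 : (0 : ℝ) ∈ Icc 0 ℓ₁ := ⟨le_rfl, hf.le⟩
  have hℓ : ℓ₁ + ℓ₂ ∈ Icc ℓ₁ (ℓ₁ + ℓ₂) := ⟨hg'.le, le_rfl⟩
  exact ⟨k, k', hk, hkf h0, hkf' h0, by simp [hkg hℓ], by simp [hkg' hℓ]⟩

theorem map (h : BCJoined ℓ x X y Y) (e : E →ₗᵢ[ℝ] F) : BCJoined ℓ (e x) (e X) (e y) (e Y) := by
  obtain ⟨f, f', hf, rfl, rfl, rfl, rfl⟩ := h
  exact ⟨_, _, hf.map e, rfl, rfl, rfl, rfl⟩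

end BCJoined

theorem bcJoined_segment {w : E} (hw : ‖w‖ = 1) (P : E) {A : ℝ} (hA : 0 ≤ A) :
    BCJoined A P w (P + A • w) w := by
  refine ⟨fun t => P + t • w, fun _ => w, ⟨hA, fun t _ => ?_, fun _ _ => hw, ?_⟩, by simp, rfl,
    rfl, rfl⟩
  · simpa using ((hasDerivAt_id t).smul_const w).const_add P |>.hasDerivWithinAt
  · exact (LipschitzWith.const w).weaken zero_le_one |>.lipschitzOnWith

theorem eq_of_hasDerivWithinAt_affine {f f' : ℝ → E} {a b : ℝ} (hab : a < b)
    (hf : ∀ t ∈ Icc a b, HasDerivWithinAt f (f' t) (Icc a b) t)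
    (hseg : ∀ t ∈ Icc a b, f t = f a + (t - a) • f' a) {t : ℝ} (ht : t ∈ Icc a b) :
    f' t = f' a := by
  have hline : HasDerivWithinAt f (f' a) (Icc a b) t := by
    refine HasDerivWithinAt.congr ?_ hseg (hseg t ht)
    simpa using (((hasDerivWithinAt_id t _).sub_const a).smul_const (f' a)).const_add (f a)
  exact (uniqueDiffOn_Icc hab t ht).eq_deriv _ (hf t ht) hline

end NormedSpace

section Plane

variable {E : Type*} [NormedAddCommGroup E] [NormedSpace ℝ E] {γ γ' : ℝ → Pt} {a b s : ℝ}

theorem _root_.BCPath.isBCPathOn (h : BCPath γ γ' s) : IsBCPathOn γ γ' 0 s :=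
  ⟨h.nonneg, h.hasDeriv, h.unitSpeed, h.lipDeriv⟩

theorem IsBCPathOn.bcPath (h : IsBCPathOn γ γ' 0 s) : BCPath γ γ' s :=
  ⟨h.le, h.hasDerivWithinAt, h.lipschitzOnWith.continuousOn, h.norm_eq_one, h.lipschitzOnWith⟩

theorem _root_.ArcOn.exists_map (h : ArcOn γ a b) (e : Pt →ₗᵢ[ℝ] E) :
    ∃ c, ∀ t ∈ Icc a b, ‖e (γ t) - c‖ = 1 := by
  obtain ⟨c, hc⟩ := h
  exact ⟨e c, fun t ht => by rw [← map_sub, e.norm_map, hc t ht]⟩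

theorem _root_.SegOn.map (h : SegOn γ γ' a b) (e : Pt →ₗᵢ[ℝ] E) :
    ∀ t ∈ Icc a b, e (γ t) = e (γ a) + (t - a) • e (γ' a) := fun t ht => by
  rw [h t ht, map_add, map_smul]

end Plane

section ComplexPlane

open Complex

-- Unit-speed motion on the unit circle through `P` with initial direction `w`, turning left
-- (`σ = 1`) or right (`σ = -1`); the centre is `P + σ I w`.
def arcPt (σ : ℝ) (P w : ℂ) (θ : ℝ) : ℂ := P + σ * I * w * (1 - cexp (↑(σ * θ) * I))

def arcDir (σ : ℝ) (w : ℂ) (θ : ℝ) : ℂ := cexp (↑(σ * θ) * I) * w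

section Arc

variable {σ : ℝ} (P w : ℂ)

theorem hasDerivAt_cexp_mul_I (θ : ℝ) :
    HasDerivAt (fun θ : ℝ => cexp (↑(σ * θ) * I)) (σ * I * cexp (↑(σ * θ) * I)) θ := by
  refine ((((hasDerivAt_id θ).const_mul σ).ofReal_comp).mul_const I).cexp.congr_deriv ?_
  simp only [id, mul_one]
  ring

theorem hasDerivAt_arcDir (θ : ℝ) : HasDerivAt (arcDir σ w) (σ * I * arcDir σ w θ) θ :=
  ((hasDerivAt_cexp_mul_I θ).mul_const w).congr_deriv (by simp only [arcDir]; ring)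

theorem hasDerivAt_arcPt (hσ : σ = 1 ∨ σ = -1) (θ : ℝ) :
    HasDerivAt (arcPt σ P w) (arcDir σ w θ) θ := by
  refine ((((hasDerivAt_cexp_mul_I θ).const_sub 1).const_mul (σ * I * w)).const_add P).congr_deriv
    ?_
  have hσ2 : (σ : ℂ) * σ = 1 := by rcases hσ with rfl | rfl <;> norm_num
  simp only [arcDir]
  linear_combination (w * cexp (↑(σ * θ) * I)) * hσ2 -
    (σ * σ * w * cexp (↑(σ * θ) * I)) * I_mul_I

@[simp] theorem norm_arcDir (θ : ℝ) : ‖arcDir σ w θ‖ = ‖w‖ := by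
  rw [arcDir, norm_mul, norm_exp_ofReal_mul_I, one_mul]

@[simp] theorem arcPt_zero : arcPt σ P w 0 = P := by simp [arcPt]

@[simp] theorem arcDir_zero : arcDir σ w 0 = w := by simp [arcDir]

theorem bcJoined_arc (hσ : σ = 1 ∨ σ = -1) {w : ℂ} (hw : ‖w‖ = 1) {θ : ℝ} (hθ : 0 ≤ θ) :
    BCJoined θ P w (arcPt σ P w θ) (arcDir σ w θ) := by
  refine ⟨arcPt σ P w, arcDir σ w, ⟨hθ, fun t _ => (hasDerivAt_arcPt P w hσ t).hasDerivWithinAt,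
    fun t _ => by rw [norm_arcDir, hw], ?_⟩, arcPt_zero P w, arcDir_zero w, rfl, rfl⟩
  refine (convex_Icc 0 θ).lipschitzOnWith_of_nnnorm_hasDerivWithin_le
    (fun t _ => (hasDerivAt_arcDir w t).hasDerivWithinAt) fun t _ => ?_
  have hσ1 : ‖(σ : ℂ)‖ = 1 := by rcases hσ with rfl | rfl <;> simp
  rw [← NNReal.coe_le_coe, coe_nnnorm, norm_mul, norm_mul, hσ1, norm_I, norm_arcDir, hw]
  simp

end Arc

theorem eq_cexp_mul_of_hasDerivWithinAt {g : ℝ → ℂ} {κ : ℂ} {a b : ℝ}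
    (hg : ∀ t ∈ Icc a b, HasDerivWithinAt g (κ * g t) (Icc a b) t) {t : ℝ} (ht : t ∈ Icc a b) :
    g t = cexp (κ * (t - a)) * g a := by
  have hd : ∀ s ∈ Icc a b,
      HasDerivWithinAt (fun s : ℝ => cexp (-κ * (s - a)) * g s) 0 (Icc a b) s := by
    intro s hs
    have he : HasDerivAt (fun s : ℝ => cexp (-κ * (s - a))) (cexp (-κ * (s - a)) * -κ) s := by
      refine (((hasDerivAt_id s).ofReal_comp.sub_const (a : ℂ)).const_mul (-κ)).cexp.congr_deriv ?_
      simp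
    exact (he.hasDerivWithinAt.mul (hg s hs)).congr_deriv (by ring)
  have hconst := (convex_Icc a b).norm_image_sub_le_of_norm_hasDerivWithin_le (C := 0) hd
    (fun _ _ => by simp) (left_mem_Icc.mpr (ht.1.trans ht.2)) ht
  rw [zero_mul, norm_le_zero_iff, sub_eq_zero, sub_self, mul_zero, Complex.exp_zero,
    one_mul] at hconst
  rw [← hconst, ← mul_assoc, ← Complex.exp_add]
  simp

theorem exists_sign_deriv_eq_of_norm_eq_one {g g' : ℝ → ℂ} {a b : ℝ} (hab : a < b)
    (hg : ∀ t ∈ Icc a b, HasDerivWithinAt g (g' t) (Icc a b) t)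
    (hg' : ContinuousOn g' (Icc a b)) (hg1 : ∀ t ∈ Icc a b, ‖g t‖ = 1)
    (hg'1 : ∀ t ∈ Icc a b, ‖g' t‖ = 1) :
    ∃ σ : ℝ, (σ = 1 ∨ σ = -1) ∧ ∀ t ∈ Icc a b, g' t = σ * I * g t := by
  have hperp : ∀ t ∈ Icc a b, (conj (g t) * g' t).re = 0 := by
    intro t ht
    have hconst : HasDerivWithinAt (fun t => ‖g t‖ ^ 2) 0 (Icc a b) t :=
      (hasDerivWithinAt_const t _ (1 : ℝ)).congr (fun s hs => by simp [hg1 s hs])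
        (by simp [hg1 t ht])
    have h0 := (uniqueDiffOn_Icc hab t ht).eq_deriv _ (hg t ht).norm_sq hconst
    rw [Complex.inner, mul_comm (g' t)] at h0
    linarith
  set τ : ℝ → ℝ := fun t => (conj (g t) * g' t).im
  have hτ : ∀ t ∈ Icc a b, conj (g t) * g' t = τ t * I := fun t ht =>
    Complex.ext (by simp [hperp t ht]) (by simp [τ])
  have hτsq : EqOn (τ ^ 2) 1 (Icc a b) := by
    intro t ht
    have hnorm : ‖(τ t : ℂ) * I‖ = 1 := by
      rw [← hτ t ht, norm_mul, norm_conj, hg1 t ht, hg'1 t ht, one_mul]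
    rw [norm_mul, norm_I, mul_one, norm_real, Real.norm_eq_abs] at hnorm
    simp [← sq_abs, hnorm]
  have hτc : ContinuousOn τ (Icc a b) :=
    continuous_im.comp_continuousOn ((continuous_conj.comp_continuousOn
      (fun t ht => (hg t ht).continuousWithinAt)).mul hg')
  obtain ⟨σ, hσ, hτσ⟩ : ∃ σ : ℝ, (σ = 1 ∨ σ = -1) ∧ ∀ t ∈ Icc a b, τ t = σ := by
    rcases isPreconnected_Icc.eq_one_or_eq_neg_one_of_sq_eq hτc hτsq with h | h
    · exact ⟨1, Or.inl rfl, fun t ht => h ht⟩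
    · exact ⟨-1, Or.inr rfl, fun t ht => h ht⟩
  refine ⟨σ, hσ, fun t ht => ?_⟩
  have hgg : g t * conj (g t) = 1 := by
    rw [mul_conj, normSq_eq_norm_sq, hg1 t ht]; norm_num
  calc g' t = g t * (conj (g t) * g' t) := by rw [← mul_assoc, hgg, one_mul]
    _ = σ * I * g t := by rw [hτ t ht, hτσ t ht]; ring

theorem IsBCPathOn.exists_eq_arcPt {f f' : ℝ → ℂ} {a b : ℝ} (h : IsBCPathOn f f' a b) (hab : a < b)
    {c : ℂ} (hc : ∀ t ∈ Icc a b, ‖f t - c‖ = 1) :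
    ∃ σ : ℝ, (σ = 1 ∨ σ = -1) ∧
      ∀ t ∈ Icc a b, f t = arcPt σ (f a) (f' a) (t - a) ∧ f' t = arcDir σ (f' a) (t - a) := by
  have hg : ∀ t ∈ Icc a b, HasDerivWithinAt (fun t => f t - c) (f' t) (Icc a b) t :=
    fun t ht => (h.hasDerivWithinAt t ht).sub_const c
  obtain ⟨σ, hσ, hf'⟩ := exists_sign_deriv_eq_of_norm_eq_one hab hg
    h.lipschitzOnWith.continuousOn hc h.norm_eq_one
  have ha : a ∈ Icc a b := left_mem_Icc.mpr hab.le
  have hσ2 : (σ : ℂ) * σ = 1 := by rcases hσ with rfl | rfl <;> norm_num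
  have hca : f a - c = -(σ * I * f' a) := by
    rw [hf' a ha]; linear_combination (σ * σ * (f a - c)) * I_mul_I - (f a - c) * hσ2
  refine ⟨σ, hσ, fun t ht => ?_⟩
  have hode := eq_cexp_mul_of_hasDerivWithinAt
    (fun s hs => by rw [← hf' s hs]; exact hg s hs) ht
  have hexp : cexp (σ * I * (t - a)) = cexp (↑(σ * (t - a)) * I) := by push_cast; ring_nf
  rw [hexp, hca] at hode
  constructor
  · simp only [arcPt]; linear_combination hode - hca
  · rw [hf' t ht, hode, arcDir]
    linear_combination (cexp (↑(σ * (t - a)) * I) * f' a) * hσ2 -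
      (σ * σ * cexp (↑(σ * (t - a)) * I) * f' a) * I_mul_I

-- End point and end direction of the path starting at `z` in direction `u` made of an arc of
-- angle `ψ`, a segment of length `A`, an arc of angle `φ` and a segment of length `B`.
def cscsDir (σ₁ σ₂ : ℝ) (u : ℂ) (ψ φ : ℝ) : ℂ := arcDir σ₂ (arcDir σ₁ u ψ) φ

def cscsEnd (σ₁ σ₂ : ℝ) (z u : ℂ) (ψ A φ B : ℝ) : ℂ :=
  arcPt σ₂ (arcPt σ₁ z u ψ + A • arcDir σ₁ u ψ) (arcDir σ₁ u ψ) φ + B • cscsDir σ₁ σ₂ u ψ φ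

theorem bcJoined_cscs {σ₁ σ₂ : ℝ} (hσ₁ : σ₁ = 1 ∨ σ₁ = -1) (hσ₂ : σ₂ = 1 ∨ σ₂ = -1) (z : ℂ)
    {u : ℂ} (hu : ‖u‖ = 1) {ψ A φ B : ℝ} (hψ : 0 ≤ ψ) (hA : 0 ≤ A) (hφ : 0 ≤ φ) (hB : 0 ≤ B) :
    BCJoined (ψ + A + φ + B) z u (cscsEnd σ₁ σ₂ z u ψ A φ B) (cscsDir σ₁ σ₂ u ψ φ) := by
  have hw : ‖arcDir σ₁ u ψ‖ = 1 := by rw [norm_arcDir, hu]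
  have hw' : ‖cscsDir σ₁ σ₂ u ψ φ‖ = 1 := by rw [cscsDir, norm_arcDir, hw]
  exact (((bcJoined_arc z hσ₁ hu hψ).trans (bcJoined_segment hw _ hA)).trans
    (bcJoined_arc _ hσ₂ hw hφ)).trans (bcJoined_segment hw' _ hB)

theorem IsBCPathOn.exists_eq_cscsEnd {f f' : ℝ → ℂ} {t₁ t₂ t₃ t₄ : ℝ} (h : IsBCPathOn f f' 0 t₄)
    (h01 : 0 < t₁) (h12 : t₁ < t₂) (h23 : t₂ < t₃) (h34 : t₃ < t₄)
    (harc₁ : ∃ c, ∀ t ∈ Icc 0 t₁, ‖f t - c‖ = 1)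
    (hseg₁ : ∀ t ∈ Icc t₁ t₂, f t = f t₁ + (t - t₁) • f' t₁)
    (harc₂ : ∃ c, ∀ t ∈ Icc t₂ t₃, ‖f t - c‖ = 1)
    (hseg₂ : ∀ t ∈ Icc t₃ t₄, f t = f t₃ + (t - t₃) • f' t₃) :
    ∃ σ₁ σ₂ : ℝ, (σ₁ = 1 ∨ σ₁ = -1) ∧ (σ₂ = 1 ∨ σ₂ = -1) ∧
      f t₄ = cscsEnd σ₁ σ₂ (f 0) (f' 0) t₁ (t₂ - t₁) (t₃ - t₂) (t₄ - t₃) ∧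
      f' t₄ = cscsDir σ₁ σ₂ (f' 0) t₁ (t₃ - t₂) := by
  obtain ⟨c₁, hc₁⟩ := harc₁
  obtain ⟨c₂, hc₂⟩ := harc₂
  obtain ⟨σ₁, hσ₁, harc₁⟩ := (h.mono le_rfl h01.le (by linarith)).exists_eq_arcPt h01 hc₁
  obtain ⟨σ₂, hσ₂, harc₂⟩ := (h.mono (by linarith) h23.le h34.le).exists_eq_arcPt h23 hc₂
  have hdir₁ := eq_of_hasDerivWithinAt_affine h12
    (h.mono h01.le h12.le (by linarith)).hasDerivWithinAt hseg₁ (right_mem_Icc.mpr h12.le)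
  have hdir₂ := eq_of_hasDerivWithinAt_affine h34
    (h.mono (by linarith) h34.le le_rfl).hasDerivWithinAt hseg₂ (right_mem_Icc.mpr h34.le)
  obtain ⟨hp₁, hd₁⟩ := harc₁ t₁ (right_mem_Icc.mpr h01.le)
  obtain ⟨hp₂, hd₂⟩ := harc₂ t₃ (right_mem_Icc.mpr h23.le)
  rw [sub_zero] at hp₁ hd₁
  refine ⟨σ₁, σ₂, hσ₁, hσ₂, ?_, ?_⟩
  · rw [hseg₂ t₄ (right_mem_Icc.mpr h34.le), hp₂, hd₂, hdir₁, hseg₁ t₂ (right_mem_Icc.mpr h12.le),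
      hp₁, hd₁, cscsEnd, cscsDir]
  · rw [hdir₂, hd₂, hdir₁, hd₁, cscsDir]

section Surgery

variable {σ₁ σ₂ : ℝ} (z u : ℂ) (ψ A φ B : ℝ)

theorem cexp_sign_mul_sub_two_pi (hσ : σ₂ = 1 ∨ σ₂ = -1) (θ : ℝ) :
    cexp (↑(σ₂ * (θ - 2 * π)) * I) = cexp (↑(σ₂ * θ) * I) := by
  rcases hσ with rfl | rfl
  · simpa [mul_sub, sub_mul] using exp_periodic.sub_eq (θ * I)
  · convert exp_periodic (-(θ * I)) using 2 <;> push_cast <;> ring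

theorem cexp_sign_mul_pi (hσ : σ₂ = 1 ∨ σ₂ = -1) : cexp (↑(σ₂ * π) * I) = -1 := by
  rcases hσ with rfl | rfl
  · simp
  · simp

theorem cscsEnd_sub_two_pi (hσ₂ : σ₂ = 1 ∨ σ₂ = -1) :
    cscsEnd σ₁ σ₂ z u ψ A (φ - 2 * π) B = cscsEnd σ₁ σ₂ z u ψ A φ B := by
  simp only [cscsEnd, cscsDir, arcPt, arcDir, cexp_sign_mul_sub_two_pi hσ₂]

theorem cscsDir_sub_two_pi (hσ₂ : σ₂ = 1 ∨ σ₂ = -1) :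
    cscsDir σ₁ σ₂ u ψ (φ - 2 * π) = cscsDir σ₁ σ₂ u ψ φ := by
  simp only [cscsDir, arcDir, cexp_sign_mul_sub_two_pi hσ₂]

theorem cscsEnd_pi_sub (hσ₂ : σ₂ = 1 ∨ σ₂ = -1) (m : ℝ) :
    cscsEnd σ₁ σ₂ z u ψ (A - m) π (B - m) = cscsEnd σ₁ σ₂ z u ψ A π B := by
  simp only [cscsEnd, cscsDir, arcPt, arcDir, cexp_sign_mul_pi hσ₂, real_smul]
  push_cast
  ring

end Surgery

end ComplexPlane

theorem cos_sign_mul {σ : ℝ} (hσ : σ = 1 ∨ σ = -1) (x : ℝ) : cos (σ * x) = cos x := by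
  rcases hσ with rfl | rfl <;> simp

theorem sin_sign_mul {σ : ℝ} (hσ : σ = 1 ∨ σ = -1) (x : ℝ) : sin (σ * x) = σ * sin x := by
  rcases hσ with rfl | rfl <;> simp

theorem exists_lt_of_hasDerivAt_ne_zero {L : ℝ → ℝ} {c x : ℝ} {p : ℝ → Prop}
    (hL : HasDerivAt L c x) (hc : c ≠ 0) (hp : ∀ᶠ y in 𝓝 x, p y) : ∃ y, p y ∧ L y < L x := by
  by_contra! hmin
  have hloc : IsLocalMin L x := hp.mono hmin
  exact hc (hloc.hasDerivAt_eq_zero hL)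

theorem sin_ne_zero_of_pos_of_lt_two_pi {φ : ℝ} (h0 : 0 < φ) (h2π : φ < 2 * π) (hπ : φ ≠ π) :
    sin φ ≠ 0 := by
  rcases hπ.lt_or_gt with h | h
  · exact (sin_pos_of_pos_of_lt_pi h0 h).ne'
  · have := sin_pos_of_pos_of_lt_pi (x := φ - π) (by linarith) (by linarith)
    rw [sin_sub_pi] at this
    linarith

section Perturbation

-- The segment lengths that keep the end point when the middle arc gains the angle `ε` and the
-- first one the angle `-σ₁ σ₂ ε`, where `k = 1 - σ₁ σ₂` (see `cscsEnd_perturb`).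
def perturbA (k A φ ε : ℝ) : ℝ := (A * sin φ + k * (cos (φ + ε) - cos φ)) / sin (φ + ε)

def perturbB (k A B φ ε : ℝ) : ℝ :=
  (A * sin ε + B * sin (φ + ε) - k * (1 - cos ε)) / sin (φ + ε)

variable {k A B φ ε : ℝ}

theorem perturb_re (hS : sin (φ + ε) ≠ 0) :
    perturbA k A φ ε * cos ε + perturbB k A B φ ε * cos φ = A + B * cos φ - k * sin ε := by
  simp only [perturbA, perturbB]
  field_simp
  rw [sin_add, cos_add]
  linear_combination (k * cos φ) * sin_sq_add_cos_sq ε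

theorem perturb_im (hS : sin (φ + ε) ≠ 0) :
    perturbB k A B φ ε * sin φ - perturbA k A φ ε * sin ε = B * sin φ + k * (1 - cos ε) := by
  simp only [perturbA, perturbB]
  field_simp
  rw [sin_add, cos_add]
  linear_combination (k * sin φ) * sin_sq_add_cos_sq ε

theorem perturbA_zero (hφ : sin φ ≠ 0) : perturbA k A φ 0 = A := by
  simp [perturbA, hφ]

theorem perturbB_zero (hφ : sin φ ≠ 0) : perturbB k A B φ 0 = B := by
  simp [perturbB, hφ]

theorem hasDerivAt_sin_add (φ : ℝ) : HasDerivAt (fun ε => sin (φ + ε)) (cos φ) 0 := by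
  simpa using ((hasDerivAt_id (0 : ℝ)).const_add φ).sin

theorem hasDerivAt_perturbA (hφ : sin φ ≠ 0) :
    HasDerivAt (perturbA k A φ) (-k - A * cos φ / sin φ) 0 := by
  have hnum : HasDerivAt (fun ε => A * sin φ + k * (cos (φ + ε) - cos φ)) (-k * sin φ) 0 := by
    simpa using
      ((((hasDerivAt_id (0 : ℝ)).const_add φ).cos.sub_const (cos φ)).const_mul k).const_add
        (A * sin φ)
  refine (hnum.div (hasDerivAt_sin_add φ) (by simpa using hφ)).congr_deriv ?_
  simp only [add_zero, sub_self, mul_zero]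
  field_simp

theorem hasDerivAt_perturbB (hφ : sin φ ≠ 0) :
    HasDerivAt (perturbB k A B φ) (A / sin φ) 0 := by
  have hnum : HasDerivAt (fun ε => A * sin ε + B * sin (φ + ε) - k * (1 - cos ε))
      (A + B * cos φ) 0 := by
    refine ((((hasDerivAt_sin 0).const_mul A).add ((hasDerivAt_sin_add φ).const_mul B)).sub
      (((hasDerivAt_cos 0).const_sub 1).const_mul k)).congr_deriv ?_
    simp
  refine (hnum.div (hasDerivAt_sin_add φ) (by simpa using hφ)).congr_deriv ?_
  simp
  field_simp
  ring

theorem exists_shorter_perturbation {ρ ψ A B φ : ℝ} (hψ : 0 < ψ) (hA : 0 < A) (hB : 0 < B)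
    (hφ : 0 < φ) (hφ2π : φ < 2 * π) (hφπ : φ ≠ π) :
    ∃ ε, (0 ≤ ψ - ρ * ε ∧ 0 ≤ φ + ε ∧ 0 ≤ perturbA (1 - ρ) A φ ε ∧
      0 ≤ perturbB (1 - ρ) A B φ ε ∧ sin (φ + ε) ≠ 0) ∧
      (1 - ρ) * ε + perturbA (1 - ρ) A φ ε + perturbB (1 - ρ) A B φ ε < A + B := by
  have hS := sin_ne_zero_of_pos_of_lt_two_pi hφ hφ2π hφπ
  have hC : 1 - cos φ ≠ 0 := by
    rw [sub_ne_zero, ne_comm, Ne, cos_eq_one_iff_of_lt_of_lt (by linarith) hφ2π]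
    exact hφ.ne'
  have hdA := hasDerivAt_perturbA (k := 1 - ρ) (A := A) hS
  have hdB := hasDerivAt_perturbB (k := 1 - ρ) (A := A) (B := B) hS
  have hdL : HasDerivAt (fun ε => (1 - ρ) * ε + perturbA (1 - ρ) A φ ε + perturbB (1 - ρ) A B φ ε)
      (A * (1 - cos φ) / sin φ) 0 :=
    ((((hasDerivAt_id (0 : ℝ)).const_mul (1 - ρ)).add hdA).add hdB).congr_deriv
      (by field_simp; ring)
  have hψε : ∀ᶠ ε in 𝓝 (0 : ℝ), 0 < ψ - ρ * ε :=
    continuousAt_const.eventually_lt (by fun_prop) (by simpa using hψ)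
  have hφε : ∀ᶠ ε in 𝓝 (0 : ℝ), 0 < φ + ε :=
    continuousAt_const.eventually_lt (by fun_prop) (by simpa using hφ)
  have hAε : ∀ᶠ ε in 𝓝 (0 : ℝ), 0 < perturbA (1 - ρ) A φ ε :=
    continuousAt_const.eventually_lt hdA.continuousAt (by rwa [perturbA_zero hS])
  have hBε : ∀ᶠ ε in 𝓝 (0 : ℝ), 0 < perturbB (1 - ρ) A B φ ε :=
    continuousAt_const.eventually_lt hdB.continuousAt (by rwa [perturbB_zero hS])
  have hSε : ∀ᶠ ε in 𝓝 (0 : ℝ), sin (φ + ε) ≠ 0 :=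
    (by fun_prop : ContinuousAt (fun ε => sin (φ + ε)) 0).eventually_ne (by simpa using hS)
  have hp : ∀ᶠ ε in 𝓝 0, 0 ≤ ψ - ρ * ε ∧ 0 ≤ φ + ε ∧ 0 ≤ perturbA (1 - ρ) A φ ε ∧
      0 ≤ perturbB (1 - ρ) A B φ ε ∧ sin (φ + ε) ≠ 0 := by
    filter_upwards [hψε, hφε, hAε, hBε, hSε] with ε h₁ h₂ h₃ h₄ h₅
    exact ⟨h₁.le, h₂.le, h₃.le, h₄.le, h₅⟩
  obtain ⟨ε, hε, hlt⟩ := exists_lt_of_hasDerivAt_ne_zero hdL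
    (div_ne_zero (mul_ne_zero hA.ne' hC) hS) hp
  refine ⟨ε, hε, ?_⟩
  simpa [perturbA_zero hS, perturbB_zero hS] using hlt

section ComplexPlane

open Complex

variable {σ₁ σ₂ : ℝ}

theorem cscsEnd_perturb (hσ₁ : σ₁ = 1 ∨ σ₁ = -1) (hσ₂ : σ₂ = 1 ∨ σ₂ = -1) (z u : ℂ)
    {ψ A φ B ε A' B' : ℝ}
    (hre : A' * Real.cos ε + B' * Real.cos φ = A + B * Real.cos φ - (1 - σ₁ * σ₂) * Real.sin ε)
    (him : B' * Real.sin φ - A' * Real.sin ε = B * Real.sin φ + (1 - σ₁ * σ₂) * (1 - Real.cos ε)) :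
    cscsEnd σ₁ σ₂ z u (ψ - σ₁ * σ₂ * ε) A' (φ + ε) B' = cscsEnd σ₁ σ₂ z u ψ A φ B := by
  have hσ₁sq : (σ₁ : ℂ) * σ₁ = 1 := by rcases hσ₁ with rfl | rfl <;> norm_num
  have hσ₂sq : σ₂ * σ₂ = 1 := by rcases hσ₂ with rfl | rfl <;> norm_num
  set e₁ := cexp (↑(σ₁ * ψ) * I)
  set q := cexp (↑(σ₂ * φ) * I)
  set r := cexp (↑(σ₂ * ε) * I)
  set r' := cexp (↑(σ₂ * -ε) * I)
  have hrr' : r * r' = 1 := by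
    rw [← Complex.exp_add, ← Complex.exp_zero]; push_cast; ring_nf
  have he₁ : cexp (↑(σ₁ * (ψ - σ₁ * σ₂ * ε)) * I) = e₁ * r' := by
    rw [← Complex.exp_add]; congr 1; push_cast
    linear_combination (-(σ₂ : ℂ) * ε * I) * hσ₁sq
  have he₂ : cexp (↑(σ₂ * (φ + ε)) * I) = q * r := by
    rw [← Complex.exp_add]; congr 1; push_cast; ring
  -- the end point condition divided by `u * e₁`; `hre` and `him` are its real and imaginary parts
  have key : A' * r' + B' * q = A + B * q + (σ₁ - σ₂) * I * (r' - 1) := by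
    apply Complex.ext <;>
      simp only [r', q, add_re, add_im, mul_re, mul_im, sub_re, sub_im, ofReal_re, ofReal_im,
        I_re, I_im, one_re, one_im, exp_ofReal_mul_I_re, exp_ofReal_mul_I_im, cos_sign_mul hσ₂,
        sin_sign_mul hσ₂, Real.cos_neg, Real.sin_neg]
    · linear_combination hre + Real.sin ε * hσ₂sq
    · linear_combination σ₂ * him - σ₁ * (1 - Real.cos ε) * hσ₂sq
  simp only [cscsEnd, cscsDir, arcPt, arcDir, he₁, he₂, real_smul]
  linear_combination (u * e₁) * key + (B' * q * e₁ * u - σ₂ * I * e₁ * u * q) * hrr'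

theorem cscsDir_perturb (hσ₁ : σ₁ = 1 ∨ σ₁ = -1) (u : ℂ) (ψ φ ε : ℝ) :
    cscsDir σ₁ σ₂ u (ψ - σ₁ * σ₂ * ε) (φ + ε) = cscsDir σ₁ σ₂ u ψ φ := by
  have hσ₁sq : (σ₁ : ℂ) * σ₁ = 1 := by rcases hσ₁ with rfl | rfl <;> norm_num
  simp only [cscsDir, arcDir, ← mul_assoc, ← Complex.exp_add]
  congr 2
  push_cast
  linear_combination (-(σ₂ : ℂ) * ε * I) * hσ₁sq

end ComplexPlane

end Perturbation

theorem exists_shorter_cscs {σ₁ σ₂ : ℝ} (hσ₁ : σ₁ = 1 ∨ σ₁ = -1) (hσ₂ : σ₂ = 1 ∨ σ₂ = -1)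
    (z : ℂ) {u : ℂ} (hu : ‖u‖ = 1) {ψ A φ B : ℝ} (hψ : 0 < ψ) (hA : 0 < A) (hφ : 0 < φ)
    (hB : 0 < B) :
    ∃ ℓ < ψ + A + φ + B, BCJoined ℓ z u (cscsEnd σ₁ σ₂ z u ψ A φ B) (cscsDir σ₁ σ₂ u ψ φ) := by
  rcases le_or_gt (2 * π) φ with hloop | hφ2π
  · refine ⟨ψ + A + (φ - 2 * π) + B, by linarith [pi_pos], ?_⟩
    rw [← cscsEnd_sub_two_pi z u ψ A φ B hσ₂, ← cscsDir_sub_two_pi u ψ φ hσ₂]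
    exact bcJoined_cscs hσ₁ hσ₂ z hu hψ.le hA.le (by linarith) hB.le
  rcases eq_or_ne φ π with rfl | hφπ
  · refine ⟨ψ + (A - min A B) + π + (B - min A B), by linarith [lt_min hA hB], ?_⟩
    rw [← cscsEnd_pi_sub z u ψ A B hσ₂ (min A B)]
    exact bcJoined_cscs hσ₁ hσ₂ z hu hψ.le (sub_nonneg.mpr (min_le_left _ _)) pi_pos.le
      (sub_nonneg.mpr (min_le_right _ _))
  obtain ⟨ε, ⟨h₁, h₂, h₃, h₄, hS⟩, hlt⟩ :=
    exists_shorter_perturbation (ρ := σ₁ * σ₂) hψ hA hB hφ hφ2π hφπ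
  refine ⟨ψ - σ₁ * σ₂ * ε + perturbA (1 - σ₁ * σ₂) A φ ε + (φ + ε) +
    perturbB (1 - σ₁ * σ₂) A B φ ε, by linarith, ?_⟩
  rw [← cscsEnd_perturb hσ₁ hσ₂ z u (perturb_re hS) (perturb_im hS),
    ← cscsDir_perturb hσ₁ u ψ φ ε]
  exact bcJoined_cscs hσ₁ hσ₂ z hu h₁ h₃ h₂ h₄

end BoundedCurvature

open BoundedCurvature in
theorem cscsc_not_minimal_general (γ γ' : ℝ → Pt) (s t₁ t₂ t₃ t₄ : ℝ)
    (h : BCPath γ γ' s)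
    (h01 : 0 < t₁) (h12 : t₁ < t₂) (h23 : t₂ < t₃) (h34 : t₃ < t₄) (h4s : t₄ < s)
    (harc₁ : ArcOn γ 0 t₁) (hseg₁ : SegOn γ γ' t₁ t₂) (harc₂ : ArcOn γ t₂ t₃)
    (hseg₂ : SegOn γ γ' t₃ t₄) :
    ∃ (η η' : ℝ → Pt) (ℓ : ℝ), BCPath η η' ℓ ∧
      η 0 = γ 0 ∧ η' 0 = γ' 0 ∧ η ℓ = γ s ∧ η' ℓ = γ' s ∧ ℓ < s := by
  set e := Complex.orthonormalBasisOneI.repr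
  have hζ := h.isBCPathOn.map e.symm.toLinearIsometry
  obtain ⟨σ₁, σ₂, hσ₁, hσ₂, hend, hdir⟩ :=
    (hζ.mono le_rfl (by linarith) h4s.le).exists_eq_cscsEnd h01 h12 h23 h34 (harc₁.exists_map _)
      (hseg₁.map _) (harc₂.exists_map _) (hseg₂.map _)
  obtain ⟨ℓ, hℓ, hjoin⟩ := exists_shorter_cscs hσ₁ hσ₂ _
    (hζ.norm_eq_one 0 ⟨le_rfl, h.nonneg⟩) h01 (sub_pos.mpr h12) (sub_pos.mpr h23)
    (sub_pos.mpr h34)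
  rw [← hend, ← hdir] at hjoin
  obtain ⟨η, η', hη, h0, h0', hs, hs'⟩ :=
    (hjoin.trans (hζ.mono (by linarith) h4s.le le_rfl).bcJoined).map e.toLinearIsometry
  exact ⟨η, η', ℓ + (s - t₄), hη.bcPath, by simpa using h0, by simpa using h0', by simpa using hs,
    by simpa using hs', by linarith⟩

/-- A non-degenerate cscsc path is not a path of minimal length. -/
theorem cscsc_not_minimal (γ γ' : ℝ → Pt) (s t₁ t₂ t₃ t₄ : ℝ)
    (h : BCPath γ γ' s)
    (h01 : 0 < t₁) (h12 : t₁ < t₂) (h23 : t₂ < t₃) (h34 : t₃ < t₄) (h4s : t₄ < s)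
    (harc₁ : ArcOn γ 0 t₁) (hseg₁ : SegOn γ γ' t₁ t₂) (harc₂ : ArcOn γ t₂ t₃)
    (hseg₂ : SegOn γ γ' t₃ t₄) (harc₃ : ArcOn γ t₄ s) :
    ∃ (η η' : ℝ → Pt) (ℓ : ℝ), BCPath η η' ℓ ∧
      η 0 = γ 0 ∧ η' 0 = γ' 0 ∧ η ℓ = γ s ∧ η' ℓ = γ' s ∧ ℓ < s :=
  cscsc_not_minimal_general γ γ' s t₁ t₂ t₃ t₄ h h01 h12 h23 h34 h4s harc₁ hseg₁ harc₂ hseg₂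
end
end

section
/- Bounded-homotopic paths have the same turning number: let (x,X),(y,Y) ∈ ℝ² × ℝ² with ‖X‖ = ‖Y‖ = 1, and let γ and η be bounded curvature paths with the endpoint condition γ(0) = η(0) = x, γ'(0) = η'(0) = X, final point y and final direction Y. If γ and η are bounded-homotopic, then their total turnings are equal: T(γ) = T(η). Consequently, for m ≠ n the subsets Γ(m) and Γ(n) of paths with turning number m and n respectively are disjoint and no path in Γ(m) is bounded-homotopic to a path in Γ(n). -/
/-!
Rescale the `p`-th path of the homotopy to `[0, 1]`. Its positions depend continuously on `(p, u)`
by assumption, and so do its directions: since directions are 1-Lipschitz, the direction at `u`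
is within `2 w L p` of the difference quotient of positions over a window of relative width `w`
around `u`. By uniform continuity, nearby paths have directions at distance `< 1`, so adding
`arcsin` of the cross product turns an angle lift of one into an angle lift of the other that
agrees with it at the common end directions. Hence the total turning is locally constant in `p`,
hence constant; and it does not depend on the lift, because two continuous lifts of the same
direction map differ by a constant in `2πℤ`.
-/

open Real Set

noncomputable section

open Filter Topology

lemma mul_mem_Icc_zero {u s : ℝ} (hu : u ∈ Icc (0 : ℝ) 1) (hs : 0 ≤ s) : u * s ∈ Icc 0 s :=
  ⟨mul_nonneg hu.1 hs, mul_le_of_le_one_left hs hu.2⟩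

def dirE (θ : ℝ) : Pt := (WithLp.equiv 2 (Fin 2 → ℝ)).symm ![cos θ, sin θ]

def crossP (v w : Pt) : ℝ := v 0 * w 1 - v 1 * w 0

@[simp] lemma dirE_apply_zero (θ : ℝ) : dirE θ 0 = cos θ := rfl

@[simp] lemma dirE_apply_one (θ : ℝ) : dirE θ 1 = sin θ := rfl

lemma norm_sq_eq_fin_two (v : Pt) : ‖v‖ ^ 2 = v 0 ^ 2 + v 1 ^ 2 := by
  simp [EuclideanSpace.norm_sq_eq, Fin.sum_univ_two]

lemma crossP_self (v : Pt) : crossP v v = 0 := by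
  rw [crossP, mul_comm, sub_self]

lemma crossP_dirE (a b : ℝ) : crossP (dirE a) (dirE b) = sin (b - a) := by
  simp only [crossP, dirE_apply_zero, dirE_apply_one, sin_sub]
  ring

lemma norm_dirE_sub_dirE_sq (a b : ℝ) : ‖dirE a - dirE b‖ ^ 2 = 2 - 2 * cos (b - a) := by
  rw [norm_sq_eq_fin_two, cos_sub]
  simp only [PiLp.sub_apply, dirE_apply_zero, dirE_apply_one]
  nlinarith [sin_sq_add_cos_sq a, sin_sq_add_cos_sq b]

lemma dirE_eq_dirE_iff {a b : ℝ} : dirE a = dirE b ↔ cos (a - b) = 1 := by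
  rw [← sub_eq_zero, ← norm_eq_zero, ← sq_eq_zero_iff, norm_dirE_sub_dirE_sq, ← cos_neg, neg_sub]
  constructor <;> intro h <;> linarith

lemma cos_sub_arcsin_sin {δ : ℝ} (h : 0 ≤ cos δ) : cos (δ - arcsin (sin δ)) = 1 := by
  rw [cos_sub, cos_arcsin, sin_arcsin (neg_one_le_sin δ) (sin_le_one δ), ← cos_sq',
    sqrt_sq h]
  nlinarith [sin_sq_add_cos_sq δ]

lemma exists_eq_dirE {v : Pt} (hv : ‖v‖ = 1) : ∃ θ, v = dirE θ := by
  set z : ℂ := ⟨v 0, v 1⟩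
  have hz : ‖z‖ = 1 := by
    rw [← hv, ← sq_eq_sq₀ (norm_nonneg _) (norm_nonneg _), Complex.sq_norm,
      Complex.normSq_apply, norm_sq_eq_fin_two]
    ring
  refine ⟨Complex.arg z, ?_⟩
  ext i
  fin_cases i
  · simp [Complex.cos_arg (norm_ne_zero_iff.mp (hz.symm ▸ one_ne_zero)), hz, z]
  · simp [Complex.sin_arg, hz, z]

/-- `‖dirE α - w‖ ^ 2 ≤ 2` says that the angle from `dirE α` to `w` lies in `[-π/2, π/2]`, the range
of `arcsin`. -/
lemma eq_dirE_add_arcsin_crossP {α : ℝ} {w : Pt} (hw : ‖w‖ = 1) (hclose : ‖dirE α - w‖ ^ 2 ≤ 2) :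
    w = dirE (α + arcsin (crossP (dirE α) w)) := by
  obtain ⟨β, rfl⟩ := exists_eq_dirE hw
  rw [norm_dirE_sub_dirE_sq] at hclose
  rw [crossP_dirE, dirE_eq_dirE_iff, ← sub_sub]
  exact cos_sub_arcsin_sin (by linarith)

section Lifts

variable {α : Type*} [TopologicalSpace α] {S : Set α}

lemma continuous_crossP : Continuous fun v : Pt × Pt => crossP v.1 v.2 := by
  unfold crossP
  fun_prop

lemma sub_eq_sub_of_dirE_eq (hS : IsPreconnected S) {θ₁ θ₂ : α → ℝ}
    (h₁ : ContinuousOn θ₁ S) (h₂ : ContinuousOn θ₂ S) (heq : ∀ u ∈ S, dirE (θ₁ u) = dirE (θ₂ u))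
    {x y : α} (hx : x ∈ S) (hy : y ∈ S) : θ₁ x - θ₂ x = θ₁ y - θ₂ y := by
  refine hS.constant_of_mapsTo (T := (AddSubgroup.zmultiples (2 * π) : Set ℝ))
    (isDiscrete_iff_discreteTopology.mpr
      (inferInstanceAs (DiscreteTopology (AddSubgroup.zmultiples (2 * π)))))
    (h₁.sub h₂) (fun u hu => ?_) hx hy
  obtain ⟨n, hn⟩ := (cos_eq_one_iff _).mp (dirE_eq_dirE_iff.mp (heq u hu))
  exact AddSubgroup.mem_zmultiples_iff.mpr ⟨n, by rwa [zsmul_eq_mul]⟩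

lemma exists_lift_of_sq_norm_sub_le {D₁ D₂ : α → Pt} {θ₁ : α → ℝ}
    (hD₁ : ContinuousOn D₁ S) (hD₂ : ContinuousOn D₂ S) (hθ₁ : ContinuousOn θ₁ S)
    (hlift : ∀ u ∈ S, D₁ u = dirE (θ₁ u)) (hunit : ∀ u ∈ S, ‖D₂ u‖ = 1)
    (hclose : ∀ u ∈ S, ‖D₁ u - D₂ u‖ ^ 2 ≤ 2) :
    ∃ θ₂ : α → ℝ, ContinuousOn θ₂ S ∧ (∀ u ∈ S, D₂ u = dirE (θ₂ u)) ∧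
      ∀ u ∈ S, D₁ u = D₂ u → θ₂ u = θ₁ u := by
  refine ⟨fun u => θ₁ u + arcsin (crossP (D₁ u) (D₂ u)), ?_, fun u hu => ?_, fun u _ h => ?_⟩
  · exact hθ₁.add <| continuous_arcsin.comp_continuousOn <|
      continuous_crossP.comp_continuousOn (hD₁.prodMk hD₂)
  · have hclose := hclose u hu
    rw [hlift u hu] at hclose
    simpa only [hlift u hu] using eq_dirE_add_arcsin_crossP (hunit u hu) hclose
  · simp only [h, crossP_self, arcsin_zero, add_zero]

end Lifts

def HasLiftWithTurning (D : ℝ → Pt) (T : ℝ) : Prop :=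
  ∃ θ : ℝ → ℝ, ContinuousOn θ (Icc 0 1) ∧ (∀ u ∈ Icc (0 : ℝ) 1, D u = dirE (θ u)) ∧
    θ 1 - θ 0 = T

namespace HasLiftWithTurning

variable {D D₁ D₂ : ℝ → Pt} {T T' : ℝ}

lemma unique (h : HasLiftWithTurning D T) (h' : HasLiftWithTurning D T') : T = T' := by
  obtain ⟨θ, hθc, hθ, rfl⟩ := h
  obtain ⟨θ', hθc', hθ', rfl⟩ := h'
  have := sub_eq_sub_of_dirE_eq isPreconnected_Icc hθc hθc'
    (fun u hu => (hθ u hu).symm.trans (hθ' u hu)) (right_mem_Icc.2 zero_le_one)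
    (left_mem_Icc.2 zero_le_one)
  linarith

lemma congr (h : HasLiftWithTurning D₁ T) (heq : EqOn D₁ D₂ (Icc 0 1)) :
    HasLiftWithTurning D₂ T := by
  obtain ⟨θ, hθc, hθ, hT⟩ := h
  exact ⟨θ, hθc, fun u hu => (heq hu).symm.trans (hθ u hu), hT⟩

lemma of_sq_norm_sub_le (h : HasLiftWithTurning D₁ T)
    (hD₁ : ContinuousOn D₁ (Icc 0 1)) (hD₂ : ContinuousOn D₂ (Icc 0 1))
    (hunit : ∀ u ∈ Icc (0 : ℝ) 1, ‖D₂ u‖ = 1) (hclose : ∀ u ∈ Icc (0 : ℝ) 1, ‖D₁ u - D₂ u‖ ^ 2 ≤ 2)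
    (h₀ : D₁ 0 = D₂ 0) (h₁ : D₁ 1 = D₂ 1) : HasLiftWithTurning D₂ T := by
  obtain ⟨θ₁, hθ₁c, hθ₁, rfl⟩ := h
  obtain ⟨θ₂, hθ₂c, hθ₂, hagree⟩ :=
    exists_lift_of_sq_norm_sub_le hD₁ hD₂ hθ₁c hθ₁ hunit hclose
  refine ⟨θ₂, hθ₂c, hθ₂, ?_⟩
  rw [hagree 0 (left_mem_Icc.2 zero_le_one) h₀, hagree 1 (right_mem_Icc.2 zero_le_one) h₁]

end HasLiftWithTurning

lemma TurningLift.hasLiftWithTurning {γ' : ℝ → Pt} {s : ℝ} {θ : ℝ → ℝ} (h : TurningLift γ' s θ)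
    (hs : 0 ≤ s) : HasLiftWithTurning (fun u => γ' (u * s)) (θ s - θ 0) := by
  have hmaps : MapsTo (fun u => u * s) (Icc 0 1) (Icc 0 s) := fun _ hu => mul_mem_Icc_zero hu hs
  refine ⟨fun u => θ (u * s), h.1.comp (continuousOn_id.mul continuousOn_const) hmaps,
    fun u hu => h.2 _ (hmaps hu), ?_⟩
  simp only [one_mul, zero_mul]

namespace BCPath

variable {γ γ' : ℝ → Pt} {s : ℝ}

lemma norm_deriv_sub_le (h : BCPath γ γ' s) {a b : ℝ} (ha : a ∈ Icc 0 s) (hb : b ∈ Icc 0 s) :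
    ‖γ' b - γ' a‖ ≤ |b - a| := by
  simpa [dist_eq_norm, Real.dist_eq] using h.lipDeriv.dist_le_mul b hb a ha

lemma norm_deriv_sub_slope_le (h : BCPath γ γ' s) {a b t : ℝ} (ha : 0 ≤ a) (hab : a < b)
    (hb : b ≤ s) (ht : t ∈ Icc 0 s) : ‖γ' t - slope γ a b‖ ≤ b - a + |t - a| := by
  have hsub : Icc a b ⊆ Icc 0 s := Icc_subset_Icc ha hb
  have hderiv : ∀ r ∈ Icc a b, HasDerivWithinAt (fun r => γ r - r • γ' t) (γ' r - γ' t)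
      (Icc a b) r := fun r hr =>
    ((h.hasDeriv r (hsub hr)).mono hsub).sub (by
      simpa using (hasDerivWithinAt_id r (Icc a b)).smul_const (γ' t))
  have hbound : ∀ r ∈ Icc a b, ‖γ' r - γ' t‖ ≤ b - a + |t - a| := fun r hr =>
    calc ‖γ' r - γ' t‖ ≤ |r - t| := h.norm_deriv_sub_le ht (hsub hr)
      _ ≤ |r - a| + |a - t| := abs_sub_le r a t
      _ ≤ b - a + |t - a| := by
        rw [abs_of_nonneg (sub_nonneg.2 hr.1), abs_sub_comm]
        linarith [hr.2]
  have hmvt := Convex.norm_image_sub_le_of_norm_hasDerivWithin_le hderiv hbound (convex_Icc a b)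
    (left_mem_Icc.2 hab.le) (right_mem_Icc.2 hab.le)
  have hba : 0 < b - a := sub_pos.2 hab
  have hkey : γ' t - slope γ a b = -(b - a)⁻¹ • ((γ b - b • γ' t) - (γ a - a • γ' t)) := by
    rw [slope_def_module]
    match_scalars <;> field_simp; ring
  rw [hkey, norm_smul, norm_neg, norm_inv, Real.norm_of_nonneg hba.le, inv_mul_le_iff₀ hba,
    mul_comm]
  simpa [Real.norm_of_nonneg hba.le] using hmvt

/-- The window `[u (1 - w), u (1 - w) + w]` lies in `[0, 1]` and contains `u`. -/
lemma norm_deriv_mul_sub_slope_le (h : BCPath γ γ' s) (hs : 0 < s) {w u : ℝ} (hw₀ : 0 < w)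
    (hw₁ : w ≤ 1) (hu : u ∈ Icc 0 1) :
    ‖γ' (u * s) - slope γ (u * (1 - w) * s) ((u * (1 - w) + w) * s)‖ ≤ 2 * w * s := by
  obtain ⟨hu₀, hu₁⟩ := hu
  have hw : u * (1 - w) + w ≤ 1 := by nlinarith
  refine (h.norm_deriv_sub_slope_le (by positivity) (by nlinarith) (by nlinarith)
    ⟨by positivity, by nlinarith⟩).trans ?_
  rw [show u * s - u * (1 - w) * s = u * w * s by ring, abs_of_nonneg (by positivity)]
  nlinarith [mul_pos hw₀ hs]

lemma deriv_eqOn_of_eqOn {φ φ' : ℝ → Pt} (hγ : BCPath γ γ' s) (hφ : BCPath φ φ' s)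
    (heq : EqOn φ γ (Icc 0 s)) (h₀ : φ' 0 = γ' 0) : EqOn φ' γ' (Icc 0 s) := by
  intro t ht
  rcases hγ.nonneg.eq_or_lt with rfl | hs
  · rw [Icc_self, mem_singleton_iff] at ht
    rwa [ht]
  exact (uniqueDiffOn_Icc hs t ht).eq_deriv _
    ((hφ.hasDeriv t ht).congr_of_mem (fun r hr => (heq hr).symm) ht) (hγ.hasDeriv t ht)

end BCPath

lemma continuousWithinAt_deriv_of_length_eq_zero {F F' : ℝ → ℝ → Pt} {L : ℝ → ℝ} {X : Pt}
    (hbc : ∀ p ∈ Icc (0 : ℝ) 1, BCPath (F p) (F' p) (L p))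
    (hX : ∀ p ∈ Icc (0 : ℝ) 1, F' p 0 = X) (hL : ContinuousOn L (Icc 0 1))
    {z : ℝ × ℝ} (hz : z ∈ Icc (0 : ℝ) 1 ×ˢ Icc (0 : ℝ) 1) (hz₀ : L z.1 = 0) :
    ContinuousWithinAt (fun q : ℝ × ℝ => F' q.1 (q.2 * L q.1)) (Icc 0 1 ×ˢ Icc 0 1) z := by
  refine continuousWithinAt_of_locally_uniform_approx_of_continuousWithinAt hz fun V hV => ?_
  obtain ⟨ε, hε, hεV⟩ := Metric.mem_uniformity_dist.mp hV
  have hLz : Tendsto (fun q : ℝ × ℝ => L q.1) (𝓝[Icc 0 1 ×ˢ Icc 0 1] z) (𝓝 (L z.1)) :=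
    (hL.comp continuousOn_fst fun q hq => hq.1) z hz
  refine ⟨{q | q ∈ Icc (0 : ℝ) 1 ×ˢ Icc (0 : ℝ) 1 ∧ L q.1 < ε},
    inter_mem self_mem_nhdsWithin (hLz.eventually_lt_const (hz₀ ▸ hε)), fun _ => X,
    continuousWithinAt_const, ?_⟩
  rintro ⟨p, u⟩ ⟨⟨hp, hu⟩, hLp⟩
  have hpath := hbc p hp
  apply hεV
  rw [dist_eq_norm, ← hX p hp]
  calc ‖F' p (u * L p) - F' p 0‖ ≤ |u * L p - 0| :=
        hpath.norm_deriv_sub_le ⟨le_rfl, hpath.nonneg⟩ (mul_mem_Icc_zero hu hpath.nonneg)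
    _ ≤ L p := by
        rw [sub_zero, abs_of_nonneg (mul_nonneg hu.1 hpath.nonneg)]
        exact mul_le_of_le_one_left hpath.nonneg hu.2
    _ < ε := hLp

lemma continuousWithinAt_deriv_of_length_pos {F F' : ℝ → ℝ → Pt} {L : ℝ → ℝ}
    (hbc : ∀ p ∈ Icc (0 : ℝ) 1, BCPath (F p) (F' p) (L p)) (hL : ContinuousOn L (Icc 0 1))
    (hG : ContinuousOn (fun q : ℝ × ℝ => F q.1 (q.2 * L q.1)) (Icc 0 1 ×ˢ Icc 0 1))
    {z : ℝ × ℝ} (hz : z ∈ Icc (0 : ℝ) 1 ×ˢ Icc (0 : ℝ) 1) (hz₀ : 0 < L z.1) :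
    ContinuousWithinAt (fun q : ℝ × ℝ => F' q.1 (q.2 * L q.1)) (Icc 0 1 ×ˢ Icc 0 1) z := by
  set K := Icc (0 : ℝ) 1 ×ˢ Icc (0 : ℝ) 1
  have hGcomp : ∀ φ : ℝ × ℝ → ℝ, Continuous φ → (∀ q ∈ K, φ q ∈ Icc 0 1) →
      ContinuousOn (fun q => F q.1 (φ q * L q.1)) K := fun φ hφ hmaps =>
    hG.comp (continuous_fst.prodMk hφ).continuousOn fun q hq => ⟨hq.1, hmaps q hq⟩
  have hLz : Tendsto (fun q : ℝ × ℝ => L q.1) (𝓝[K] z) (𝓝 (L z.1)) :=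
    (hL.comp continuousOn_fst fun q hq => hq.1) z hz
  refine continuousWithinAt_of_locally_uniform_approx_of_continuousWithinAt hz fun V hV => ?_
  obtain ⟨ε, hε, hεV⟩ := Metric.mem_uniformity_dist.mp hV
  obtain ⟨w, hw₀, hw₁, hwε⟩ : ∃ w : ℝ, 0 < w ∧ w ≤ 1 ∧ 4 * w * L z.1 < ε :=
    ⟨min 1 (ε / (8 * L z.1)), by positivity, min_le_left _ _, by
      have := min_le_right 1 (ε / (8 * L z.1))
      rw [le_div_iff₀ (by positivity)] at this
      linarith⟩
  refine ⟨{q | q ∈ K ∧ L q.1 ∈ Ioo 0 (2 * L z.1)},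
    inter_mem self_mem_nhdsWithin (hLz (Ioo_mem_nhds hz₀ (by linarith))),
    fun q => slope (F q.1) (q.2 * (1 - w) * L q.1) ((q.2 * (1 - w) + w) * L q.1), ?_, ?_⟩
  · have hwidth : ∀ q : ℝ × ℝ, (q.2 * (1 - w) + w) * L q.1 - q.2 * (1 - w) * L q.1
        = w * L q.1 := fun q => by ring
    have hdiff := (hGcomp (fun q => q.2 * (1 - w) + w) (by fun_prop)
        (fun q hq => ⟨by nlinarith [hq.2.1], by nlinarith [hq.2.2]⟩)).sub
      (hGcomp (fun q => q.2 * (1 - w)) (by fun_prop)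
        (fun q hq => ⟨by nlinarith [hq.2.1], by nlinarith [hq.2.2]⟩))
    simp only [slope_def_module, hwidth]
    exact ((hLz.const_mul w).inv₀ (by positivity)).smul (hdiff z hz)
  · rintro ⟨p, u⟩ ⟨⟨hp, hu⟩, hLp₀, hLp₁⟩
    apply hεV
    rw [dist_eq_norm]
    calc _ ≤ 2 * w * L p := (hbc p hp).norm_deriv_mul_sub_slope_le hLp₀ hw₀ hw₁ hu
      _ < ε := by nlinarith

lemma continuousOn_deriv_of_bddHomotopy {F F' : ℝ → ℝ → Pt} {L : ℝ → ℝ} {X : Pt}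
    (hbc : ∀ p ∈ Icc (0 : ℝ) 1, BCPath (F p) (F' p) (L p))
    (hX : ∀ p ∈ Icc (0 : ℝ) 1, F' p 0 = X) (hL : ContinuousOn L (Icc 0 1))
    (hG : ContinuousOn (fun q : ℝ × ℝ => F q.1 (q.2 * L q.1)) (Icc 0 1 ×ˢ Icc 0 1)) :
    ContinuousOn (fun q : ℝ × ℝ => F' q.1 (q.2 * L q.1)) (Icc 0 1 ×ˢ Icc 0 1) := fun z hz =>
  (hbc z.1 hz.1).nonneg.eq_or_lt.elim
    (fun hz₀ => continuousWithinAt_deriv_of_length_eq_zero hbc hX hL hz hz₀.symm)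
    (continuousWithinAt_deriv_of_length_pos hbc hL hG hz)

lemma HasLiftWithTurning.of_homotopy {H : ℝ → ℝ → Pt} {X Y : Pt} {T : ℝ}
    (hH : ContinuousOn (Function.uncurry H) (Icc 0 1 ×ˢ Icc 0 1))
    (hunit : ∀ p ∈ Icc (0 : ℝ) 1, ∀ u ∈ Icc (0 : ℝ) 1, ‖H p u‖ = 1)
    (hX : ∀ p ∈ Icc (0 : ℝ) 1, H p 0 = X) (hY : ∀ p ∈ Icc (0 : ℝ) 1, H p 1 = Y)
    (hT : HasLiftWithTurning (H 0) T) : HasLiftWithTurning (H 1) T := by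
  have hfibre : ∀ p ∈ Icc (0 : ℝ) 1, ContinuousOn (H p) (Icc 0 1) := fun p hp =>
    hH.comp (Continuous.prodMk_right p).continuousOn fun u hu => ⟨hp, hu⟩
  obtain ⟨δ, hδ, hclose⟩ := Metric.uniformContinuousOn_iff.mp
    ((isCompact_Icc.prod isCompact_Icc).uniformContinuousOn_of_continuous hH) 1 one_pos
  have hstep : ∀ p ∈ Icc (0 : ℝ) 1, ∀ q ∈ Icc (0 : ℝ) 1, dist q p < δ →
      ∀ T, HasLiftWithTurning (H p) T → HasLiftWithTurning (H q) T := by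
    intro p hp q hq hpq T hT
    refine hT.of_sq_norm_sub_le (hfibre p hp) (hfibre q hq) (hunit q hq) (fun u hu => ?_)
      ((hX p hp).trans (hX q hq).symm) ((hY p hp).trans (hY q hq).symm)
    have h := hclose (p, u) ⟨hp, hu⟩ (q, u) ⟨hq, hu⟩
      (by simpa [Prod.dist_eq, dist_comm] using hpq)
    rw [dist_eq_norm, Function.uncurry_apply_pair, Function.uncurry_apply_pair] at h
    nlinarith [norm_nonneg (H p u - H q u)]
  refine isPreconnected_Icc.induction₂'
    (fun p q => ∀ T, HasLiftWithTurning (H p) T → HasLiftWithTurning (H q) T) (fun p hp => ?_)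
    (fun _ _ _ _ _ _ hpq hqr T h => hqr T (hpq T h)) (left_mem_Icc.2 zero_le_one)
    (right_mem_Icc.2 zero_le_one) T hT
  filter_upwards [self_mem_nhdsWithin, nhdsWithin_le_nhds (Metric.ball_mem_nhds p hδ)]
    with q hq hpq
  exact ⟨hstep p hp q hq hpq, hstep q hq p hp (by rwa [dist_comm])⟩

lemma BCPath.hasLiftWithTurning {γ γ' φ φ' : ℝ → Pt} {s : ℝ} {θ : ℝ → ℝ} (hγ : BCPath γ γ' s)
    (hφ : BCPath φ φ' s) (heq : EqOn φ γ (Icc 0 s)) (h₀ : φ' 0 = γ' 0)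
    (hθ : TurningLift γ' s θ) : HasLiftWithTurning (fun u => φ' (u * s)) (θ s - θ 0) :=
  (hθ.hasLiftWithTurning hγ.nonneg).congr fun _ hu =>
    (hγ.deriv_eqOn_of_eqOn hφ heq h₀ (mul_mem_Icc_zero hu hγ.nonneg)).symm

theorem bddHomotopic_total_turning_eq_general (x X y Y : Pt)
    (γ γ' η η' : ℝ → Pt) (s₀ s₁ : ℝ)
    (hγ : BCPath γ γ' s₀) (hη : BCPath η η' s₁)
    (heγ : EndCond γ γ' s₀ x X y Y) (heη : EndCond η η' s₁ x X y Y)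
    (hhom : BddHomotopic x X y Y γ s₀ η s₁)
    (θγ θη : ℝ → ℝ) (hθγ : TurningLift γ' s₀ θγ) (hθη : TurningLift η' s₁ θη) :
    θγ s₀ - θγ 0 = θη s₁ - θη 0 := by
  obtain ⟨F, F', L, hF, rfl, rfl, hF₀, hF₁, hL, hG⟩ := hhom
  have hbc : ∀ p ∈ Icc (0 : ℝ) 1, BCPath (F p) (F' p) (L p) := fun p hp => (hF p hp).1
  have hX : ∀ p ∈ Icc (0 : ℝ) 1, F' p 0 = X := fun p hp => (hF p hp).2.2.1
  have hturn₀ : HasLiftWithTurning (fun u => F' 0 (u * L 0)) (θγ (L 0) - θγ 0) :=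
    hγ.hasLiftWithTurning (hbc 0 (left_mem_Icc.2 zero_le_one)) (fun t ht => hF₀ t ht)
      ((hX 0 (left_mem_Icc.2 zero_le_one)).trans heγ.2.1.symm) hθγ
  have hturn₁ : HasLiftWithTurning (fun u => F' 1 (u * L 1)) (θη (L 1) - θη 0) :=
    hη.hasLiftWithTurning (hbc 1 (right_mem_Icc.2 zero_le_one)) (fun t ht => hF₁ t ht)
      ((hX 1 (right_mem_Icc.2 zero_le_one)).trans heη.2.1.symm) hθη
  have hturn : HasLiftWithTurning (fun u => F' 1 (u * L 1)) (θγ (L 0) - θγ 0) :=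
    HasLiftWithTurning.of_homotopy (H := fun p u => F' p (u * L p)) (X := X) (Y := Y)
      (continuousOn_deriv_of_bddHomotopy hbc hX hL hG)
      (fun p hp u hu => (hbc p hp).unitSpeed _ (mul_mem_Icc_zero hu (hbc p hp).nonneg))
      (fun p hp => by simpa only [zero_mul] using hX p hp)
      (fun p hp => by simpa only [one_mul] using (hF p hp).2.2.2.2) hturn₀
  exact hturn.unique hturn₁

/-- Bounded-homotopic paths have the same total turning. -/
theorem bddHomotopic_total_turning_eq (x X y Y : Pt) (hX : ‖X‖ = 1) (hY : ‖Y‖ = 1)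
    (γ γ' η η' : ℝ → Pt) (s₀ s₁ : ℝ)
    (hγ : BCPath γ γ' s₀) (hη : BCPath η η' s₁)
    (heγ : EndCond γ γ' s₀ x X y Y) (heη : EndCond η η' s₁ x X y Y)
    (hhom : BddHomotopic x X y Y γ s₀ η s₁)
    (θγ θη : ℝ → ℝ) (hθγ : TurningLift γ' s₀ θγ) (hθη : TurningLift η' s₁ θη) :
    θγ s₀ - θγ 0 = θη s₁ - θη 0 :=
  bddHomotopic_total_turning_eq_general x X y Y γ γ' η η' s₀ s₁ hγ hη heγ heη hhom θγ θη hθγ hθη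
end
end
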